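/- arXiv:2406.06011 — 2 statements merged into one kernel-verified Lean document; each statement's English description precedes it below -/
import Mathlib

section
/- Let X be a topological space, α an aperiodic homeomorphism of X, F a Banach function space on X satisfying condition Ω_α, and w a measurable positive function on X such that w and w⁻¹ = 1/w are bounded, so that T̃_{α,w}(f) = w·(f∘α) is an invertible bounded linear operator on F. Then the following are equivalent: (i) T̃_{α,w} is topologically semi-transitive on F; (ii) for each compact subset K of X there exist a sequence (E_k) of Borel subsets of K and a strictly increasing sequence (n_k) of natural numbers such that lim_{k→∞} ‖χ_{K∖E_k}‖_F = 0 and lim_{k→∞} [ ( sup_{x∈E_k} ∏_{j=0}^{n_k−1} (w(α^j(x)))⁻¹ ) · ( sup_{x∈E_k} ∏_{j=1}^{n_k} w(α^{−j}(x)) ) ] = 0. -/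
open Filter Finset Topology

/-!
Write `P_n x = ∏_{j<n} w (α^j x)`, so that `(T^n f) x = P_n x · f (α^n x)`, and note that
`P_n (α^{-n} x) = ∏_{j=1}^{n} w (α^{-j} x)`. Point evaluations are continuous on a solid space
containing the indicators of singletons.

(i) ⇒ (ii). Fix a compact `K` and `δ > 0`. Semi-transitivity gives `f` and `λ T^n f` both
`ε`-close to `χ_K`. Continuity of point evaluations rules out each fixed `n` for small `ε`, so
`n` can be made large, and then `α^{±n} K` misses `K`. On the set `E ⊆ K` where `f ≈ 1`,
`f ∘ α^n ≈ 0`, `λ T^n f ≈ 1` and `(λ T^n f) ∘ α^{-n} ≈ 0` one reads off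
`P_n⁻¹ ≤ 2|λ|δ` and `P_n ∘ α^{-n} ≤ 2δ/|λ|`; solidity bounds `‖χ_{K∖E}‖` by `O(ε/δ)`.

(ii) ⇒ (i). Approximate the centres of the two open sets by bounded `f, g` supported in `K`,
restrict them to `E_k`, and take `u = f χ_{E_k} + λ⁻¹ S^{n_k} (g χ_{E_k})`, with `λ` balancing
the two suprema of (ii). Then `‖u - f‖` and `‖λ T^{n_k} u - g‖` are controlled by
`‖χ_{K∖E_k}‖` and by the product of the suprema.
-/

/-- A bounded linear operator `T` on a complex normed space is *topologically
semi-transitive* if for every pair of nonempty open subsets `O₁, O₂` there exist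
`n ∈ ℕ` and `λ ∈ ℂ \ {0}` such that `λ • T^n(O₁) ∩ O₂ ≠ ∅`. -/
def IsSemiTransitive {E : Type*} [NormedAddCommGroup E] [NormedSpace ℂ E]
    (T : E →L[ℂ] E) : Prop :=
  ∀ O₁ O₂ : Set E, IsOpen O₁ → IsOpen O₂ → O₁.Nonempty → O₂.Nonempty →
    ∃ (n : ℕ) (lam : ℂ), 1 ≤ n ∧ lam ≠ 0 ∧ ∃ f ∈ O₁, lam • (T ^ n) f ∈ O₂

theorem prod_range_iterate_eq_prod_Icc {X M : Type*} [CommMonoid M] {f g : X → X}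
    (hfg : Function.LeftInverse f g) (w : X → M) (n : ℕ) (x : X) :
    ∏ j ∈ range n, w (f^[j] (g^[n] x)) = ∏ j ∈ Icc 1 n, w (g^[j] x) := by
  induction n with
  | zero => simp
  | succ n ih =>
    rw [prod_range_succ', prod_Icc_succ_top (by omega), ← ih]
    congr 1
    refine prod_congr rfl fun j _ => ?_
    rw [Function.iterate_succ_apply, Function.iterate_succ_apply', hfg]

theorem not_mapsTo_iterate {X : Type*} {f : X → X} {K : Set X} {N n : ℕ} (hK : K.Nonempty)
    (hN : ∀ m ≥ N, Set.MapsTo f^[m] K Kᶜ) (hn : 1 ≤ n) : ¬ Set.MapsTo f^[n] K K := by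
  intro h
  obtain ⟨x, hx⟩ := hK
  have hx' := h.iterate N hx
  rw [← Function.iterate_mul] at hx'
  exact hN (n * N) (Nat.le_mul_of_pos_left N hn) hx hx'

theorem Set.MapsTo.compl_of_leftInverse {X : Type*} {f g : X → X} {K : Set X}
    (hfg : Function.LeftInverse f g) (h : Set.MapsTo f K Kᶜ) : Set.MapsTo g K Kᶜ :=
  fun x hx hgx => h hgx ((hfg x).symm ▸ hx)

theorem exists_pos_mul_lt_and_inv_mul_lt {A B r : ℝ} (hA : 0 ≤ A) (hB : 0 ≤ B) (hr : 0 < r)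
    (hAB : A * B < r ^ 2) : ∃ c > 0, c * B < r ∧ c⁻¹ * A < r := by
  suffices ∃ c > 0, c * B < r ∧ A < c * r by
    obtain ⟨c, hc, hcB, hcA⟩ := this
    exact ⟨c, hc, hcB, by rwa [inv_mul_lt_iff₀ hc]⟩
  rcases hB.eq_or_lt with rfl | hB
  · exact ⟨A / r + 1, by positivity, by simpa using hr, by
      rw [add_mul, div_mul_cancel₀ _ hr.ne']; linarith⟩
  · obtain ⟨c, hAc, hcB⟩ := _root_.exists_between
      (show A / r < r / B by rw [div_lt_div_iff₀ hr hB]; nlinarith)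
    exact ⟨c, (div_nonneg hA hr.le).trans_lt hAc, (lt_div_iff₀ hB).1 hcB, (div_lt_iff₀ hr).1 hAc⟩

theorem sSup_image_nonneg {X : Type*} {u : X → ℝ} (hu : ∀ x, 0 ≤ u x) (s : Set X) :
    0 ≤ sSup (u '' s) :=
  Real.sSup_nonneg (Set.forall_mem_image.2 fun x _ => hu x)

theorem bddAbove_image_prod {X : Type*} {u : X → ℝ} {C : ℝ} (hu : ∀ x, 0 ≤ u x)
    (hC : ∀ x, u x ≤ C) (s : Finset ℕ) (φ : ℕ → X → X) (E : Set X) :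
    BddAbove ((fun x => ∏ j ∈ s, u (φ j x)) '' E) :=
  ⟨C ^ #s, Set.forall_mem_image.2 fun _ _ =>
    (prod_le_prod (fun _ _ => hu _) fun _ _ => hC _).trans_eq (prod_const C)⟩

theorem sSup_image_mul_sSup_image_le {X : Type*} {u v : X → ℝ} {E : Set X} {a b : ℝ}
    (hv : ∀ x, 0 ≤ v x) (ha : 0 ≤ a) (hb : 0 ≤ b) (huv : ∀ x ∈ E, u x ≤ a ∧ v x ≤ b) :
    sSup (u '' E) * sSup (v '' E) ≤ a * b :=
  mul_le_mul (Real.sSup_le (Set.forall_mem_image.2 fun x hx => (huv x hx).1) ha)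
    (Real.sSup_le (Set.forall_mem_image.2 fun x hx => (huv x hx).2) hb) (sSup_image_nonneg hv E) ha

theorem one_half_lt_norm_of_norm_sub_one_lt {u : ℂ} (h : ‖u - 1‖ < 1 / 2) : 1 / 2 < ‖u‖ := by
  have := norm_sub_norm_le 1 u
  rw [norm_one, norm_sub_rev] at this
  linarith

theorem inv_le_and_le_of_norm_sub_one_lt {p q δ : ℝ} (hp : 0 < p) (hq : 0 < q) {a b c : ℂ}
    (hc : c ≠ 0) (hb : ‖b - 1‖ < 1 / 2) (hcpa : ‖c * p * a - 1‖ < 1 / 2) (ha : ‖a‖ < δ)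
    (hcqb : ‖c * q * b‖ < δ) : p⁻¹ ≤ 2 * ‖c‖ * δ ∧ q ≤ 2 * δ / ‖c‖ := by
  have hc' : 0 < ‖c‖ := norm_pos_iff.2 hc
  have hb' := one_half_lt_norm_of_norm_sub_one_lt hb
  have hcpa' := one_half_lt_norm_of_norm_sub_one_lt hcpa
  simp only [norm_mul, Complex.norm_real, Real.norm_of_nonneg hp.le,
    Real.norm_of_nonneg hq.le] at hcpa' hcqb
  constructor
  · rw [inv_le_iff_one_le_mul₀ hp]
    nlinarith [mul_le_mul_of_nonneg_left ha.le (mul_nonneg hc'.le hp.le)]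
  · rw [le_div_iff₀ hc']
    nlinarith [mul_le_mul_of_nonneg_left hb'.le (mul_nonneg hq.le hc'.le)]

structure IsSolidFunctionSpace {X : Type*} [MeasurableSpace X] {𝓕 : Type*}
    [NormedAddCommGroup 𝓕] [NormedSpace ℂ 𝓕] (ι : 𝓕 →ₗ[ℂ] (X → ℂ)) : Prop where
  injective : Function.Injective ι
  measurable : ∀ f, Measurable (ι f)
  solid : ∀ (f : 𝓕) (g : X → ℂ), Measurable g → (∀ x, ‖g x‖ ≤ ‖ι f x‖) →
    ∃ g' : 𝓕, ι g' = g ∧ ‖g'‖ ≤ ‖f‖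

def IsCompInvariant {X 𝓕 : Type*} [Norm 𝓕] (ι : 𝓕 → X → ℂ) (φ : X → X) : Prop :=
  ∀ f : 𝓕, ∃ f' : 𝓕, ι f' = ι f ∘ φ ∧ ‖f'‖ = ‖f‖

theorem IsCompInvariant.iterate {X 𝓕 : Type*} [Norm 𝓕] {ι : 𝓕 → X → ℂ} {φ : X → X}
    (hφ : IsCompInvariant ι φ) (n : ℕ) : IsCompInvariant ι φ^[n] := by
  induction n with
  | zero => exact fun f => ⟨f, rfl, rfl⟩
  | succ n ih =>
    intro f
    obtain ⟨f₁, hf₁, hn₁⟩ := ih f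
    obtain ⟨f₂, hf₂, hn₂⟩ := hφ f₁
    exact ⟨f₂, by rw [hf₂, hf₁, Function.iterate_succ, Function.comp_assoc], hn₂.trans hn₁⟩

-- Condition (ii) on the compact set `K`, with `φ, ψ` in the roles of `α, α⁻¹`.
def WeightCondition {X : Type*} [MeasurableSpace X] {𝓕 : Type*} [NormedAddCommGroup 𝓕]
    [NormedSpace ℂ 𝓕] (ι : 𝓕 →ₗ[ℂ] (X → ℂ)) (w : X → ℝ) (φ ψ : X → X) (K : Set X) : Prop :=
  ∃ (E : ℕ → Set X) (n : ℕ → ℕ),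
    (∀ k, MeasurableSet (E k)) ∧ (∀ k, E k ⊆ K) ∧
    StrictMono n ∧ (∀ k, 1 ≤ n k) ∧
    (∃ g : ℕ → 𝓕, (∀ k, ι (g k) = Set.indicator (K \ E k) 1) ∧
      Tendsto (fun k => ‖g k‖) atTop (𝓝 0)) ∧
    Tendsto (fun k =>
        sSup ((fun x => ∏ j ∈ range (n k), (w (φ^[j] x))⁻¹) '' E k) *
        sSup ((fun x => ∏ j ∈ Icc 1 (n k), w (ψ^[j] x)) '' E k))
      atTop (𝓝 0)

namespace IsSolidFunctionSpace

variable {X : Type*} [MeasurableSpace X] {𝓕 : Type*} [NormedAddCommGroup 𝓕] [NormedSpace ℂ 𝓕]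
  {ι : 𝓕 →ₗ[ℂ] (X → ℂ)}

theorem exists_of_norm_le_mul (hF : IsSolidFunctionSpace ι) {g : X → ℂ} (hg : Measurable g)
    {c : ℝ} (hc : 0 ≤ c) {m : 𝓕} (hgm : ∀ x, ‖g x‖ ≤ c * ‖ι m x‖) :
    ∃ g' : 𝓕, ι g' = g ∧ ‖g'‖ ≤ c * ‖m‖ := by
  obtain ⟨g', hg', hle⟩ := hF.solid ((c : ℂ) • m) g hg fun x => by
    simpa [norm_smul, abs_of_nonneg hc] using hgm x
  exact ⟨g', hg', hle.trans_eq (by simp [norm_smul, abs_of_nonneg hc])⟩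

theorem norm_le_mul_of_forall_norm_le (hF : IsSolidFunctionSpace ι) {h m : 𝓕} {c : ℝ}
    (hc : 0 ≤ c) (hhm : ∀ x, ‖ι h x‖ ≤ c * ‖ι m x‖) : ‖h‖ ≤ c * ‖m‖ := by
  obtain ⟨g', hg', hle⟩ := hF.exists_of_norm_le_mul (hF.measurable h) hc hhm
  rwa [← hF.injective hg']

theorem exists_of_norm_le_sum (hF : IsSolidFunctionSpace ι) {β : Type*} (s : Finset β)
    (h : β → 𝓕) {g : X → ℂ} (hg : Measurable g) (hgh : ∀ x, ‖g x‖ ≤ ∑ i ∈ s, ‖ι (h i) x‖) :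
    ∃ g' : 𝓕, ι g' = g ∧ ‖g'‖ ≤ ∑ i ∈ s, ‖h i‖ := by
  choose a ha ha_le using fun i => hF.solid (h i) (fun x => (‖ι (h i) x‖ : ℂ))
    (Complex.measurable_ofReal.comp (hF.measurable (h i)).norm) fun x => by simp
  obtain ⟨g', hg', hle⟩ := hF.solid (∑ i ∈ s, a i) g hg fun x => by
    have hsum : ι (∑ i ∈ s, a i) x = ((∑ i ∈ s, ‖ι (h i) x‖ : ℝ) : ℂ) := by simp [ha]
    rw [hsum, Complex.norm_of_nonneg (sum_nonneg fun i _ => norm_nonneg _)]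
    exact hgh x
  exact ⟨g', hg', hle.trans ((norm_sum_le _ _).trans (sum_le_sum fun i _ => ha_le i))⟩

theorem measurableSet_of_apply_eq_indicator (hF : IsSolidFunctionSpace ι) {χ : 𝓕} {K : Set X}
    (hχ : ι χ = K.indicator 1) : MeasurableSet K :=
  (measurable_indicator_const_iff (1 : ℂ)).1 (hχ ▸ hF.measurable χ)

theorem continuous_apply [TopologicalSpace X] (hF : IsSolidFunctionSpace ι)
    (hchi : ∀ E : Set X, IsCompact E → ∃ g : 𝓕, ι g = E.indicator 1) (x : X) :
    Continuous fun f => ι f x := by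
  obtain ⟨χ, hχ⟩ := hchi {x} isCompact_singleton
  have hχ0 : 0 < ‖χ‖ := norm_pos_iff.2 fun h => by simpa [h] using congrFun hχ x
  refine continuous_of_linear_of_bound (𝕜 := ℂ) (fun f g => by simp) (fun c f => by simp)
    (C := ‖χ‖⁻¹) fun f => ?_
  rw [inv_mul_eq_div, le_div_iff₀ hχ0]
  have := hF.norm_le_mul_of_forall_norm_le zero_le_one (h := ι f x • χ) (m := f) fun y => by
    by_cases hy : y = x <;> simp [hχ, hy]
  simpa [norm_smul] using this

theorem norm_le_of_apply_eq_mul_comp (hF : IsSolidFunctionSpace ι) {ψ : X → X}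
    (hψ : IsCompInvariant ι ψ) {c : X → ℂ} {h χ v : 𝓕} {C M : ℝ}
    (hC : 0 ≤ C) (hM : 0 ≤ M) (hhχ : ∀ y, ‖ι h y‖ ≤ C * ‖ι χ y‖)
    (hc : ∀ x, ι h (ψ x) ≠ 0 → ‖c x‖ ≤ M) (hv : ∀ x, ι v x = c x * ι h (ψ x)) :
    ‖v‖ ≤ M * C * ‖χ‖ := by
  obtain ⟨χ', hχ', hχ'χ⟩ := hψ χ
  rw [← hχ'χ]
  refine hF.norm_le_mul_of_forall_norm_le (by positivity) fun x => ?_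
  rw [hv, norm_mul, hχ', Function.comp_apply, mul_assoc]
  by_cases hx : ι h (ψ x) = 0
  · simp only [hx, norm_zero, mul_zero]
    positivity
  · exact mul_le_mul (hc x hx) (hhχ _) (norm_nonneg _) hM

theorem exists_indicator_diff_setOf_norm_lt (hF : IsSolidFunctionSpace ι) {K : Set X}
    (hK : MeasurableSet K) {β : Type*} (s : Finset β) (h : β → 𝓕) {t : β → ℝ}
    (ht : ∀ i ∈ s, 0 < t i) :
    MeasurableSet {x | ∀ i ∈ s, ‖ι (h i) x‖ < t i} ∧
      ∃ g : 𝓕, ι g = (K \ {x | ∀ i ∈ s, ‖ι (h i) x‖ < t i}).indicator 1 ∧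
        ‖g‖ ≤ ∑ i ∈ s, ‖h i‖ / t i := by
  have hmeas : MeasurableSet {x | ∀ i ∈ s, ‖ι (h i) x‖ < t i} := by
    simp only [Set.ofPred_forall]
    exact Finset.measurableSet_biInter s fun i _ =>
      measurableSet_lt (hF.measurable (h i)).norm measurable_const
  have hnorm : ∀ i ∈ s, ∀ f : 𝓕, ‖((t i)⁻¹ : ℂ) • f‖ = ‖f‖ / t i := fun i hi f => by
    rw [norm_smul, norm_inv, Complex.norm_real, Real.norm_of_nonneg (ht i hi).le, inv_mul_eq_div]
  have hbound : ∀ x, ‖(K \ {x | ∀ i ∈ s, ‖ι (h i) x‖ < t i}).indicator (1 : X → ℂ) x‖ ≤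
      ∑ i ∈ s, ‖ι (((t i)⁻¹ : ℂ) • h i) x‖ := fun x => by
    by_cases hx : x ∈ K \ {x | ∀ i ∈ s, ‖ι (h i) x‖ < t i}
    · obtain ⟨i, hi, hti⟩ : ∃ i ∈ s, t i ≤ ‖ι (h i) x‖ := by simpa using hx.2
      rw [Set.indicator_of_mem hx, Pi.one_apply, norm_one]
      calc (1 : ℝ) ≤ ‖ι (h i) x‖ / t i := (one_le_div (ht i hi)).2 hti
        _ = ‖ι (((t i)⁻¹ : ℂ) • h i) x‖ := by
          rw [map_smul, Pi.smul_apply, norm_smul, norm_inv, Complex.norm_real,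
            Real.norm_of_nonneg (ht i hi).le, inv_mul_eq_div]
        _ ≤ _ := single_le_sum (f := fun i => ‖ι (((t i)⁻¹ : ℂ) • h i) x‖)
            (fun _ _ => norm_nonneg _) hi
    · rw [Set.indicator_of_notMem hx, norm_zero]
      exact sum_nonneg fun _ _ => norm_nonneg _
  obtain ⟨g, hg, hle⟩ := hF.exists_of_norm_le_sum s _ (measurable_one.indicator (hK.diff hmeas))
    hbound
  exact ⟨hmeas, g, hg, hle.trans_eq (sum_congr rfl fun i hi => hnorm i hi _)⟩

end IsSolidFunctionSpace

section WeightedComposition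

variable {X : Type*} {𝓕 : Type*} [NormedAddCommGroup 𝓕] [NormedSpace ℂ 𝓕]
  {ι : 𝓕 →ₗ[ℂ] (X → ℂ)} {T : 𝓕 →L[ℂ] 𝓕} {w : X → ℝ} {φ : X → X}

theorem apply_pow_apply (hT : ∀ f x, ι (T f) x = (w x : ℂ) * ι f (φ x)) (n : ℕ) (f : 𝓕)
    (x : X) : ι ((T ^ n) f) x = ((∏ j ∈ range n, w (φ^[j] x) : ℝ) : ℂ) * ι f (φ^[n] x) := by
  induction n generalizing f with
  | zero => simp
  | succ n ih =>
    rw [pow_succ, mul_apply_eq_comp, ih, hT, prod_range_succ, Function.iterate_succ_apply']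
    push_cast
    ring

theorem apply_smul_pow_apply (hT : ∀ f x, ι (T f) x = (w x : ℂ) * ι f (φ x)) (c : ℂ) (n : ℕ)
    (f : 𝓕) (x : X) :
    ι (c • (T ^ n) f) x = c * ((∏ j ∈ range n, w (φ^[j] x) : ℝ) : ℂ) * ι f (φ^[n] x) := by
  rw [map_smul, Pi.smul_apply, apply_pow_apply hT, smul_eq_mul, mul_assoc]

theorem apply_inverse_pow_apply {ψ : X → X} (hφψ : Function.LeftInverse φ ψ) (hw : ∀ x, w x ≠ 0)
    (hT : ∀ f x, ι (T f) x = (w x : ℂ) * ι f (φ x)) {S : 𝓕 →L[ℂ] 𝓕} (hTS : ∀ f, T (S f) = f)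
    (n : ℕ) (f : 𝓕) (x : X) :
    ι ((S ^ n) f) x = ((∏ j ∈ Icc 1 n, w (ψ^[j] x) : ℝ) : ℂ)⁻¹ * ι f (ψ^[n] x) := by
  have hf := apply_pow_apply hT n ((S ^ n) f) (ψ^[n] x)
  rw [show (T ^ n) ((S ^ n) f) = f by simpa using Function.LeftInverse.iterate hTS n f,
    prod_range_iterate_eq_prod_Icc hφψ, hφψ.iterate n x] at hf
  rw [hf, inv_mul_cancel_left₀]
  exact_mod_cast prod_ne_zero_iff.2 fun j _ => hw _

end WeightedComposition

namespace IsSolidFunctionSpace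

variable {X : Type*} [MeasurableSpace X] {𝓕 : Type*} [NormedAddCommGroup 𝓕] [NormedSpace ℂ 𝓕]
  {ι : 𝓕 →ₗ[ℂ] (X → ℂ)} {T : 𝓕 →L[ℂ] 𝓕} {w : X → ℝ} {φ ψ : X → X}

theorem exists_subset_sSup_mul_sSup_le (hF : IsSolidFunctionSpace ι)
    (hφ : IsCompInvariant ι φ) (hψ : IsCompInvariant ι ψ)
    (hφψ : Function.LeftInverse φ ψ) (hw : ∀ x, 0 < w x)
    (hT : ∀ f x, ι (T f) x = (w x : ℂ) * ι f (φ x)) {K : Set X} (hK : MeasurableSet K) {χ : 𝓕}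
    (hχ : ι χ = K.indicator 1) {n : ℕ} (hφn : Set.MapsTo φ^[n] K Kᶜ)
    (hψn : Set.MapsTo ψ^[n] K Kᶜ) {f : 𝓕} {c : ℂ} (hc : c ≠ 0) {ε δ : ℝ} (hδ : 0 < δ)
    (hf : ‖f - χ‖ < ε) (hg : ‖c • (T ^ n) f - χ‖ < ε) :
    ∃ E : Set X, MeasurableSet E ∧ E ⊆ K ∧
      (∃ g : 𝓕, ι g = (K \ E).indicator 1 ∧ ‖g‖ ≤ 4 * ε + 2 * ε / δ) ∧
      sSup ((fun x => ∏ j ∈ range n, (w (φ^[j] x))⁻¹) '' E) *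
        sSup ((fun x => ∏ j ∈ Icc 1 n, w (ψ^[j] x)) '' E) ≤ 4 * δ ^ 2 := by
  obtain ⟨h₃, hh₃, hn₃⟩ := hφ.iterate n (f - χ)
  obtain ⟨h₄, hh₄, hn₄⟩ := hψ.iterate n (c • (T ^ n) f - χ)
  set h : Fin 4 → 𝓕 := ![f - χ, c • (T ^ n) f - χ, h₃, h₄]
  set t : Fin 4 → ℝ := ![1 / 2, 1 / 2, δ, δ]
  obtain ⟨hS, g, hgK, hgle⟩ := hF.exists_indicator_diff_setOf_norm_lt hK univ h (t := t)
    (by simp [Fin.forall_fin_succ, t, hδ])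
  set E := {x | ∀ i ∈ univ, ‖ι (h i) x‖ < t i} ∩ K
  refine ⟨E, hS.inter hK, Set.inter_subset_right,
    ⟨g, by rw [Set.sdiff_inter_self_eq_sdiff]; exact hgK, ?_⟩, ?_⟩
  · refine hgle.trans ?_
    have h₁ : ‖f - χ‖ / δ ≤ ε / δ := by gcongr
    have h₂ : ‖c • (T ^ n) f - χ‖ / δ ≤ ε / δ := by gcongr
    simp only [Fin.sum_univ_four, h, t, Matrix.cons_val, hn₃, hn₄, one_div, div_inv_eq_mul]
    linarith [show 2 * ε / δ = ε / δ + ε / δ by ring]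
  have hc' : 0 < ‖c‖ := norm_pos_iff.2 hc
  have hbound : ∀ x ∈ E, ∏ j ∈ range n, (w (φ^[j] x))⁻¹ ≤ 2 * ‖c‖ * δ ∧
      ∏ j ∈ Icc 1 n, w (ψ^[j] x) ≤ 2 * δ / ‖c‖ := by
    rintro x ⟨hxS, hxK⟩
    have hx : ∀ i, ‖ι (h i) x‖ < t i := fun i => hxS i (mem_univ i)
    have e₁ : ι (h 0) x = ι f x - 1 := by simp [h, hχ, hxK]
    have e₂ : ι (h 1) x = c * ((∏ j ∈ range n, w (φ^[j] x) : ℝ) : ℂ) * ι f (φ^[n] x) - 1 := by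
      simp only [h, Matrix.cons_val, map_sub, Pi.sub_apply, apply_smul_pow_apply hT, hχ,
        Set.indicator_of_mem hxK, Pi.one_apply]
    have e₃ : ι (h 2) x = ι f (φ^[n] x) := by
      simp [h, hh₃, hχ, Set.indicator_of_notMem (hφn hxK)]
    have e₄ : ι (h 3) x = c * ((∏ j ∈ Icc 1 n, w (ψ^[j] x) : ℝ) : ℂ) * ι f x := by
      simp only [h, Matrix.cons_val, hh₄, Function.comp_apply, map_sub, Pi.sub_apply,
        apply_smul_pow_apply hT, hχ, Set.indicator_of_notMem (hψn hxK), sub_zero,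
        prod_range_iterate_eq_prod_Icc hφψ, hφψ.iterate n x]
    rw [prod_inv_distrib]
    exact inv_le_and_le_of_norm_sub_one_lt (prod_pos fun j _ => hw _) (prod_pos fun j _ => hw _)
      hc (e₁ ▸ hx 0) (e₂ ▸ hx 1) (e₃ ▸ hx 2) (e₄ ▸ hx 3)
  calc _ ≤ (2 * ‖c‖ * δ) * (2 * δ / ‖c‖) := sSup_image_mul_sSup_image_le
        (fun x => prod_nonneg fun j _ => (hw _).le) (by positivity) (by positivity) hbound
    _ = 4 * δ ^ 2 := by field_simp; ring

theorem norm_sub_le_of_apply_eq_indicator (hF : IsSolidFunctionSpace ι) {K E : Set X}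
    {f fE h : 𝓕} {C : ℝ} (hC : 0 ≤ C) (hfC : ∀ x, ‖ι f x‖ ≤ C) (hfK : ∀ x ∉ K, ι f x = 0)
    (hfE : ι fE = E.indicator (ι f)) (hh : ι h = (K \ E).indicator 1) :
    ‖f - fE‖ ≤ C * ‖h‖ := by
  refine hF.norm_le_mul_of_forall_norm_le hC fun x => ?_
  rw [map_sub, Pi.sub_apply, hfE, hh]
  by_cases hxE : x ∈ E
  · simp only [Set.indicator_of_mem hxE, sub_self, norm_zero]
    positivity
  by_cases hxK : x ∈ K
  · simpa [hxE, hxK] using hfC x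
  · simp [hxE, hxK, hfK x hxK]

theorem norm_pow_apply_le_sSup_mul (hF : IsSolidFunctionSpace ι)
    (hφ : IsCompInvariant ι φ) (hφψ : Function.LeftInverse φ ψ)
    (hψφ : Function.LeftInverse ψ φ) (hw : ∀ x, 0 < w x) (hw_bdd : ∃ C, ∀ x, w x ≤ C)
    (hT : ∀ f x, ι (T f) x = (w x : ℂ) * ι f (φ x)) {E : Set X} {f χ : 𝓕} {C : ℝ}
    (hC : 0 ≤ C) (hfχ : ∀ x, ‖ι f x‖ ≤ C * ‖ι χ x‖) (hfE : ∀ x ∉ E, ι f x = 0) (m : ℕ) :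
    ‖(T ^ m) f‖ ≤ sSup ((fun x => ∏ j ∈ Icc 1 m, w (ψ^[j] x)) '' E) * C * ‖χ‖ := by
  obtain ⟨Cw, hCw⟩ := hw_bdd
  refine hF.norm_le_of_apply_eq_mul_comp (hφ.iterate m) hC
    (sSup_image_nonneg (fun x => prod_nonneg fun j _ => (hw _).le) _) hfχ (fun x hx => ?_)
    (apply_pow_apply hT m f)
  have hxE : φ^[m] x ∈ E := by_contra fun h => hx (hfE _ h)
  rw [Complex.norm_of_nonneg (prod_nonneg fun j _ => (hw _).le)]
  calc ∏ j ∈ range m, w (φ^[j] x) = ∏ j ∈ range m, w (φ^[j] (ψ^[m] (φ^[m] x))) := by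
        rw [hψφ.iterate m x]
    _ = ∏ j ∈ Icc 1 m, w (ψ^[j] (φ^[m] x)) := prod_range_iterate_eq_prod_Icc hφψ w m _
    _ ≤ _ := le_csSup (bddAbove_image_prod (fun x => (hw x).le) hCw _ _ E) ⟨_, hxE, rfl⟩

theorem norm_inverse_pow_apply_le_sSup_mul (hF : IsSolidFunctionSpace ι)
    (hψ : IsCompInvariant ι ψ) (hφψ : Function.LeftInverse φ ψ)
    (hw : ∀ x, 0 < w x) (hw_inv_bdd : ∃ C, ∀ x, (w x)⁻¹ ≤ C)
    (hT : ∀ f x, ι (T f) x = (w x : ℂ) * ι f (φ x)) {S : 𝓕 →L[ℂ] 𝓕} (hTS : ∀ f, T (S f) = f)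
    {E : Set X} {f χ : 𝓕} {C : ℝ} (hC : 0 ≤ C) (hfχ : ∀ x, ‖ι f x‖ ≤ C * ‖ι χ x‖)
    (hfE : ∀ x ∉ E, ι f x = 0) (m : ℕ) :
    ‖(S ^ m) f‖ ≤ sSup ((fun x => ∏ j ∈ range m, (w (φ^[j] x))⁻¹) '' E) * C * ‖χ‖ := by
  obtain ⟨Ci, hCi⟩ := hw_inv_bdd
  refine hF.norm_le_of_apply_eq_mul_comp (hψ.iterate m) hC
    (sSup_image_nonneg (fun x => prod_nonneg fun j _ => (inv_pos.2 (hw _)).le) _) hfχ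
    (fun x hx => ?_) (apply_inverse_pow_apply hφψ (fun x => (hw x).ne') hT hTS m f)
  have hxE : ψ^[m] x ∈ E := by_contra fun h => hx (hfE _ h)
  rw [norm_inv, Complex.norm_of_nonneg (prod_nonneg fun j _ => (hw _).le),
    ← prod_range_iterate_eq_prod_Icc hφψ, ← prod_inv_distrib]
  exact le_csSup (bddAbove_image_prod (fun x => (inv_pos.2 (hw x)).le) hCi _ _ E) ⟨_, hxE, rfl⟩

theorem exists_apply_eq_indicator_apply (hF : IsSolidFunctionSpace ι) {K E : Set X}
    (hE : MeasurableSet E) (hEK : E ⊆ K) {χ : 𝓕} (hχ : ι χ = K.indicator 1) {v : 𝓕} {C : ℝ}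
    (hC : 0 ≤ C) (hvC : ∀ x, ‖ι v x‖ ≤ C) :
    ∃ vE : 𝓕, ι vE = E.indicator (ι v) ∧ (∀ x, ‖ι vE x‖ ≤ C * ‖ι χ x‖) ∧
      ∀ x ∉ E, ι vE x = 0 := by
  obtain ⟨vE, hvE, -⟩ := hF.solid v (E.indicator (ι v)) ((hF.measurable v).indicator hE)
    fun x => norm_indicator_le_norm_self _ _
  refine ⟨vE, hvE, fun x => ?_, fun x hx => by simp [hvE, hx]⟩
  by_cases hx : x ∈ E
  · simpa [hvE, hχ, hx, hEK hx] using hvC x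
  · simp only [hvE, Set.indicator_of_notMem hx, norm_zero]
    positivity

theorem exists_dist_lt_of_sSup_mul_lt (hF : IsSolidFunctionSpace ι)
    (hφ : IsCompInvariant ι φ) (hψ : IsCompInvariant ι ψ)
    (hφψ : Function.LeftInverse φ ψ) (hψφ : Function.LeftInverse ψ φ) (hw : ∀ x, 0 < w x)
    (hw_bdd : ∃ C, ∀ x, w x ≤ C) (hw_inv_bdd : ∃ C, ∀ x, (w x)⁻¹ ≤ C)
    (hT : ∀ f x, ι (T f) x = (w x : ℂ) * ι f (φ x)) {S : 𝓕 →L[ℂ] 𝓕} (hTS : ∀ f, T (S f) = f)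
    {K E : Set X} (hE : MeasurableSet E) (hEK : E ⊆ K) {χ h : 𝓕} (hχ : ι χ = K.indicator 1)
    (hh : ι h = (K \ E).indicator 1) {f g : 𝓕} {C : ℝ} (hC : 0 ≤ C) (hfC : ∀ x, ‖ι f x‖ ≤ C)
    (hgC : ∀ x, ‖ι g x‖ ≤ C) (hfK : ∀ x ∉ K, ι f x = 0) (hgK : ∀ x ∉ K, ι g x = 0) {ε : ℝ}
    (hCh : C * ‖h‖ < ε / 2) (m : ℕ) {c : ℝ} (hc : 0 < c)
    (hcB : C * ‖χ‖ * (c * sSup ((fun x => ∏ j ∈ Icc 1 m, w (ψ^[j] x)) '' E)) < ε / 2)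
    (hcA : C * ‖χ‖ * (c⁻¹ * sSup ((fun x => ∏ j ∈ range m, (w (φ^[j] x))⁻¹) '' E)) < ε / 2) :
    ∃ u : 𝓕, dist u f < ε ∧ dist ((c : ℂ) • (T ^ m) u) g < ε := by
  obtain ⟨fE, hfE, hfEχ, hfE0⟩ := hF.exists_apply_eq_indicator_apply hE hEK hχ hC hfC
  obtain ⟨gE, hgE, hgEχ, hgE0⟩ := hF.exists_apply_eq_indicator_apply hE hEK hχ hC hgC
  have hTfE : c * ‖(T ^ m) fE‖ < ε / 2 := calc
    _ ≤ c * (sSup ((fun x => ∏ j ∈ Icc 1 m, w (ψ^[j] x)) '' E) * C * ‖χ‖) := by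
        gcongr
        exact hF.norm_pow_apply_le_sSup_mul hφ hφψ hψφ hw hw_bdd hT hC hfEχ hfE0 m
    _ = _ := by ring
    _ < ε / 2 := hcB
  have hSgE : c⁻¹ * ‖(S ^ m) gE‖ < ε / 2 := calc
    _ ≤ c⁻¹ * (sSup ((fun x => ∏ j ∈ range m, (w (φ^[j] x))⁻¹) '' E) * C * ‖χ‖) := by
        gcongr
        exact hF.norm_inverse_pow_apply_le_sSup_mul hψ hφψ hw hw_inv_bdd hT hTS hC hgEχ hgE0 m
    _ = _ := by ring
    _ < ε / 2 := hcA
  have hf' := hF.norm_sub_le_of_apply_eq_indicator hC hfC hfK hfE hh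
  have hg' := hF.norm_sub_le_of_apply_eq_indicator hC hgC hgK hgE hh
  have hcC : (c : ℂ) ≠ 0 := by exact_mod_cast hc.ne'
  refine ⟨fE + (c : ℂ)⁻¹ • (S ^ m) gE, ?_, ?_⟩
  · rw [dist_eq_norm, show fE + (c : ℂ)⁻¹ • (S ^ m) gE - f =
      (c : ℂ)⁻¹ • (S ^ m) gE - (f - fE) by abel]
    calc _ ≤ ‖(c : ℂ)⁻¹ • (S ^ m) gE‖ + ‖f - fE‖ := norm_sub_le _ _
      _ < ε / 2 + ε / 2 := by
        rw [norm_smul, norm_inv, Complex.norm_of_nonneg hc.le]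
        linarith
      _ = ε := add_halves ε
  · have hTS' : (T ^ m) ((S ^ m) gE) = gE := by
      simpa using Function.LeftInverse.iterate hTS m gE
    rw [dist_eq_norm, map_add, map_smul, hTS', smul_add, smul_smul, mul_inv_cancel₀ hcC, one_smul,
      show (c : ℂ) • (T ^ m) fE + gE - g = (c : ℂ) • (T ^ m) fE - (g - gE) by abel]
    calc _ ≤ ‖(c : ℂ) • (T ^ m) fE‖ + ‖g - gE‖ := norm_sub_le _ _
      _ < ε / 2 + ε / 2 := by
        rw [norm_smul, Complex.norm_of_nonneg hc.le]
        linarith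
      _ = ε := add_halves ε

end IsSolidFunctionSpace

namespace IsSolidFunctionSpace

variable {X : Type*} [TopologicalSpace X] [MeasurableSpace X] {𝓕 : Type*} [NormedAddCommGroup 𝓕]
  [NormedSpace ℂ 𝓕] {ι : 𝓕 →ₗ[ℂ] (X → ℂ)} {T : 𝓕 →L[ℂ] 𝓕} {w : X → ℝ} {φ ψ : X → X}

theorem not_tendsto_smul_pow_nhds (hF : IsSolidFunctionSpace ι)
    (hchi : ∀ E : Set X, IsCompact E → ∃ g : 𝓕, ι g = E.indicator 1)
    (hφψ : Function.LeftInverse φ ψ) (hw : ∀ x, 0 < w x)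
    (hT : ∀ f x, ι (T f) x = (w x : ℂ) * ι f (φ x)) {K : Set X} {χ : 𝓕}
    (hχ : ι χ = K.indicator 1) {n : ℕ} {x y : X} (hx : x ∈ K) (hxn : φ^[n] x ∉ K) (hy : y ∈ K)
    (hyn : ψ^[n] y ∉ K) {β : Type*} {l : Filter β} [l.NeBot] {f : β → 𝓕} {c : β → ℂ}
    (hf : Tendsto f l (𝓝 χ)) : ¬ Tendsto (fun i => c i • (T ^ n) (f i)) l (𝓝 χ) := by
  intro hg
  set P : X → ℂ := fun z => ((∏ j ∈ range n, w (φ^[j] z) : ℝ) : ℂ)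
  have hev : ∀ {u : β → 𝓕} (z : X), Tendsto u l (𝓝 χ) →
      Tendsto (fun i => ι (u i) z) l (𝓝 (K.indicator 1 z)) := fun z hu =>
    hχ ▸ ((hF.continuous_apply hchi z).tendsto χ).comp hu
  have h₁ : Tendsto (fun i => ι (f i) (φ^[n] x)) l (𝓝 0) := by simpa [hxn] using hev (φ^[n] x) hf
  have h₂ : Tendsto (fun i => ι (f i) y) l (𝓝 1) := by simpa [hy] using hev y hf
  have h₃ : Tendsto (fun i => c i * P x * ι (f i) (φ^[n] x)) l (𝓝 1) := by
    simpa only [apply_smul_pow_apply hT, Set.indicator_of_mem hx, Pi.one_apply] using hev x hg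
  have h₄ : Tendsto (fun i => c i * P (ψ^[n] y) * ι (f i) y) l (𝓝 0) := by
    simpa only [apply_smul_pow_apply hT, Set.indicator_of_notMem hyn, hφψ.iterate n y] using
      hev (ψ^[n] y) hg
  -- `c i * P x * P (ψ^[n] y) * ι (f i) (φ^[n] x) * ι (f i) y` tends to `P (ψ^[n] y)` and to `0`
  have hP := tendsto_nhds_unique ((h₃.mul h₂).mul_const (P (ψ^[n] y)))
    (((h₄.mul h₁).mul_const (P x)).congr fun i => by ring)
  have hPpos : (0 : ℝ) < ∏ j ∈ range n, w (φ^[j] (ψ^[n] y)) := prod_pos fun j _ => hw _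
  simp only [mul_one, one_mul, mul_zero, zero_mul, P] at hP
  exact hPpos.ne' (by exact_mod_cast hP)

theorem eventually_le_dist_smul_pow (hF : IsSolidFunctionSpace ι)
    (hchi : ∀ E : Set X, IsCompact E → ∃ g : 𝓕, ι g = E.indicator 1)
    (hφψ : Function.LeftInverse φ ψ) (hw : ∀ x, 0 < w x)
    (hT : ∀ f x, ι (T f) x = (w x : ℂ) * ι f (φ x)) {K : Set X} {χ : 𝓕}
    (hχ : ι χ = K.indicator 1) {n : ℕ} {x y : X} (hx : x ∈ K) (hxn : φ^[n] x ∉ K) (hy : y ∈ K)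
    (hyn : ψ^[n] y ∉ K) :
    ∀ᶠ ε in 𝓝[>] (0 : ℝ), ∀ (f : 𝓕) (c : ℂ), dist f χ < ε → ε ≤ dist (c • (T ^ n) f) χ := by
  suffices ∃ τ > 0, ∀ (f : 𝓕) (c : ℂ), dist f χ < τ → τ ≤ dist (c • (T ^ n) f) χ by
    obtain ⟨τ, hτ, h⟩ := this
    filter_upwards [Ioo_mem_nhdsGT hτ] with ε hε f c hf
    exact hε.2.le.trans (h f c (hf.trans hε.2))
  by_contra! hcon
  choose f c hf hg using fun k : ℕ => hcon (1 / (k + 1)) Nat.one_div_pos_of_nat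
  have hlim : ∀ {u : ℕ → 𝓕}, (∀ k, dist (u k) χ < 1 / (k + 1)) → Tendsto u atTop (𝓝 χ) :=
    fun hu => tendsto_iff_dist_tendsto_zero.2 <| squeeze_zero (fun _ => dist_nonneg)
      (fun k => (hu k).le) tendsto_one_div_add_atTop_nhds_zero_nat
  exact hF.not_tendsto_smul_pow_nhds hchi hφψ hw hT hχ hx hxn hy hyn (hlim hf) (hlim hg)

theorem eventually_exists_lt_pow_dist_lt (hF : IsSolidFunctionSpace ι)
    (hchi : ∀ E : Set X, IsCompact E → ∃ g : 𝓕, ι g = E.indicator 1)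
    (hφψ : Function.LeftInverse φ ψ) (hw : ∀ x, 0 < w x)
    (hT : ∀ f x, ι (T f) x = (w x : ℂ) * ι f (φ x)) (hsemi : IsSemiTransitive T) {K : Set X}
    (hK : K.Nonempty) {χ : 𝓕} (hχ : ι χ = K.indicator 1) {N : ℕ}
    (hφN : ∀ m ≥ N, Set.MapsTo φ^[m] K Kᶜ) (hψN : ∀ m ≥ N, Set.MapsTo ψ^[m] K Kᶜ) (M : ℕ) :
    ∀ᶠ ε in 𝓝[>] (0 : ℝ), ∃ n > M, ∃ c : ℂ, c ≠ 0 ∧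
      ∃ f : 𝓕, dist f χ < ε ∧ dist (c • (T ^ n) f) χ < ε := by
  have hret : ∀ᶠ ε in 𝓝[>] (0 : ℝ), ∀ j ∈ Icc 1 M, ∀ (f : 𝓕) (c : ℂ),
      dist f χ < ε → ε ≤ dist (c • (T ^ j) f) χ := by
    refine (eventually_all_finset _).2 fun j hj => ?_
    have hj₁ : 1 ≤ j := (mem_Icc.1 hj).1
    obtain ⟨x, hx, hxj⟩ : ∃ x ∈ K, φ^[j] x ∉ K := by
      by_contra! h
      exact not_mapsTo_iterate hK hφN hj₁ h
    obtain ⟨y, hy, hyj⟩ : ∃ y ∈ K, ψ^[j] y ∉ K := by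
      by_contra! h
      exact not_mapsTo_iterate hK hψN hj₁ h
    exact hF.eventually_le_dist_smul_pow hchi hφψ hw hT hχ hx hxj hy hyj
  filter_upwards [eventually_mem_nhdsWithin, hret] with ε hε hεret
  obtain ⟨n, c, hn, hc, f, hf, hg⟩ := hsemi (Metric.ball χ ε) (Metric.ball χ ε)
    Metric.isOpen_ball Metric.isOpen_ball ⟨χ, Metric.mem_ball_self hε⟩
    ⟨χ, Metric.mem_ball_self hε⟩
  refine ⟨n, ?_, c, hc, f, hf, hg⟩
  by_contra! h
  exact (hεret n (mem_Icc.2 ⟨hn, h⟩) f c hf).not_gt hg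

theorem frequently_exists_subset_sSup_mul_sSup_le (hF : IsSolidFunctionSpace ι)
    (hchi : ∀ E : Set X, IsCompact E → ∃ g : 𝓕, ι g = E.indicator 1)
    (hφ : IsCompInvariant ι φ) (hψ : IsCompInvariant ι ψ)
    (hφψ : Function.LeftInverse φ ψ) (hw : ∀ x, 0 < w x)
    (hT : ∀ f x, ι (T f) x = (w x : ℂ) * ι f (φ x)) (hsemi : IsSemiTransitive T) {K : Set X}
    (hK : IsCompact K) {N : ℕ} (hN : ∀ m ≥ N, Set.MapsTo φ^[m] K Kᶜ) {r : ℝ} (hr : 0 < r) :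
    ∃ᶠ n in atTop, 1 ≤ n ∧ ∃ E : Set X, MeasurableSet E ∧ E ⊆ K ∧
      (∃ g : 𝓕, ι g = (K \ E).indicator 1 ∧ ‖g‖ ≤ r) ∧
      sSup ((fun x => ∏ j ∈ range n, (w (φ^[j] x))⁻¹) '' E) *
        sSup ((fun x => ∏ j ∈ Icc 1 n, w (ψ^[j] x)) '' E) ≤ r := by
  obtain ⟨χ, hχ⟩ := hchi K hK
  rcases K.eq_empty_or_nonempty with rfl | hKne
  · exact frequently_atTop.2 fun M => ⟨M + 1, by omega, by omega, ∅, .empty, subset_rfl,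
      ⟨0, by ext; simp, by simp [hr.le]⟩, by simp [hr.le]⟩
  set δ := min 1 (r / 4)
  have hδ : 0 < δ := by positivity
  have hδr : 4 * δ ^ 2 ≤ r := by nlinarith [min_le_left 1 (r / 4), min_le_right 1 (r / 4)]
  have hψN : ∀ m ≥ N, Set.MapsTo ψ^[m] K Kᶜ := fun m hm =>
    (hN m hm).compl_of_leftInverse (hφψ.iterate m)
  have hsmall : ∀ᶠ ε in 𝓝[>] (0 : ℝ), 4 * ε + 2 * ε / δ < r :=
    (((by fun_prop : Continuous fun ε : ℝ => 4 * ε + 2 * ε / δ).tendsto' 0 0 (by simp)).mono_left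
      nhdsWithin_le_nhds).eventually_lt_const hr
  refine frequently_atTop.2 fun M => ?_
  obtain ⟨ε, hεr, n, hn, c, hc, f, hf, hg⟩ := (hsmall.and
    (hF.eventually_exists_lt_pow_dist_lt hchi hφψ hw hT hsemi hKne hχ hN hψN (max M N))).exists
  rw [dist_eq_norm] at hf hg
  obtain ⟨E, hE, hEK, ⟨g, hgK, hgle⟩, hprod⟩ := hF.exists_subset_sSup_mul_sSup_le hφ hψ hφψ hw hT
    (hF.measurableSet_of_apply_eq_indicator hχ) hχ (hN n (by omega)) (hψN n (by omega)) hc hδ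
    hf hg
  exact ⟨n, by omega, by omega, E, hE, hEK, ⟨g, hgK, hgle.trans hεr.le⟩, hprod.trans hδr⟩

theorem weight_condition_of_isSemiTransitive (hF : IsSolidFunctionSpace ι)
    (hchi : ∀ E : Set X, IsCompact E → ∃ g : 𝓕, ι g = E.indicator 1) {α : X ≃ₜ X}
    (haper : ∀ K : Set X, IsCompact K → ∃ N : ℕ, 0 < N ∧ ∀ n ≥ N, ((⇑α)^[n] '' K) ∩ K = ∅)
    (hα : IsCompInvariant ι α) (hαsymm : IsCompInvariant ι α.symm) (hw : ∀ x, 0 < w x)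
    (hT : ∀ f x, ι (T f) x = (w x : ℂ) * ι f (α x)) (hsemi : IsSemiTransitive T) {K : Set X}
    (hK : IsCompact K) : WeightCondition ι w α α.symm K := by
  obtain ⟨N, -, hN⟩ := haper K hK
  have hN' : ∀ m ≥ N, Set.MapsTo (⇑α)^[m] K Kᶜ := fun m hm x hx hxK =>
    (Set.eq_empty_iff_forall_notMem.1 (hN m hm)) _ ⟨⟨x, hx, rfl⟩, hxK⟩
  obtain ⟨n, hn, hgood⟩ := extraction_forall_of_frequently fun k : ℕ =>
    hF.frequently_exists_subset_sSup_mul_sSup_le hchi hα hαsymm α.apply_symm_apply hw hT hsemi hK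
      hN' (r := 1 / (k + 1)) Nat.one_div_pos_of_nat
  choose hn₁ E hE hEK hgE hprod using hgood
  choose g hg hgle using hgE
  unfold WeightCondition
  refine ⟨E, n, hE, hEK, hn, hn₁,
    ⟨g, hg, squeeze_zero (fun _ => norm_nonneg _) hgle tendsto_one_div_add_atTop_nhds_zero_nat⟩,
    squeeze_zero (fun k => mul_nonneg ?_ ?_) hprod tendsto_one_div_add_atTop_nhds_zero_nat⟩
  · exact sSup_image_nonneg (fun x => prod_nonneg fun j _ => (inv_pos.2 (hw _)).le) _
  · exact sSup_image_nonneg (fun x => prod_nonneg fun j _ => (hw _).le) _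

theorem exists_dist_lt_of_weight_condition (hF : IsSolidFunctionSpace ι)
    (hchi : ∀ E : Set X, IsCompact E → ∃ g : 𝓕, ι g = E.indicator 1)
    (hφ : IsCompInvariant ι φ) (hψ : IsCompInvariant ι ψ)
    (hφψ : Function.LeftInverse φ ψ) (hψφ : Function.LeftInverse ψ φ) (hw : ∀ x, 0 < w x)
    (hw_bdd : ∃ C, ∀ x, w x ≤ C) (hw_inv_bdd : ∃ C, ∀ x, (w x)⁻¹ ≤ C)
    (hT : ∀ f x, ι (T f) x = (w x : ℂ) * ι f (φ x)) {S : 𝓕 →L[ℂ] 𝓕} (hTS : ∀ f, T (S f) = f)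
    {K : Set X} (hK : IsCompact K) (hcond : WeightCondition ι w φ ψ K)
    {f g : 𝓕} {C : ℝ} (hC : 0 ≤ C) (hfC : ∀ x, ‖ι f x‖ ≤ C) (hgC : ∀ x, ‖ι g x‖ ≤ C)
    (hfK : ∀ x ∉ K, ι f x = 0) (hgK : ∀ x ∉ K, ι g x = 0) {ε : ℝ} (hε : 0 < ε) :
    ∃ (m : ℕ) (c : ℂ), 1 ≤ m ∧ c ≠ 0 ∧ ∃ u : 𝓕, dist u f < ε ∧ dist (c • (T ^ m) u) g < ε := by
  obtain ⟨E, n, hE, hEK, -, hn, ⟨h, hh, hh0⟩, hAB⟩ := hcond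
  obtain ⟨χ, hχ⟩ := hchi K hK
  set r := ε / (2 * (C * ‖χ‖ + 1))
  have hr : 0 < r := by positivity
  have hCr : C * ‖χ‖ * r < ε / 2 := by
    have : (C * ‖χ‖ + 1) * r = ε / 2 := by
      simp only [r]
      field_simp
    nlinarith
  have hCh : Tendsto (fun k => C * ‖h k‖) atTop (𝓝 0) := by simpa using hh0.const_mul C
  obtain ⟨k, hk₁, hk₂⟩ := ((hCh.eventually_lt_const (half_pos hε)).and
    (hAB.eventually_lt_const (pow_pos hr 2))).exists
  obtain ⟨c, hc, hcB, hcA⟩ := exists_pos_mul_lt_and_inv_mul_lt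
    (sSup_image_nonneg (fun x => prod_nonneg fun j _ => (inv_pos.2 (hw _)).le) _)
    (sSup_image_nonneg (fun x => prod_nonneg fun j _ => (hw _).le) _) hr hk₂
  have hCχ : 0 ≤ C * ‖χ‖ := by positivity
  obtain ⟨u, hu, hcu⟩ := hF.exists_dist_lt_of_sSup_mul_lt hφ hψ hφψ hψφ hw hw_bdd hw_inv_bdd hT
    hTS (hE k) (hEK k) hχ (hh k) hC hfC hgC hfK hgK hk₁ (n k) hc
    ((mul_le_mul_of_nonneg_left hcB.le hCχ).trans_lt hCr)
    ((mul_le_mul_of_nonneg_left hcA.le hCχ).trans_lt hCr)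
  exact ⟨n k, c, hn k, by exact_mod_cast hc.ne', u, hu, hcu⟩

theorem isSemiTransitive_of_weight_condition (hF : IsSolidFunctionSpace ι)
    (hchi : ∀ E : Set X, IsCompact E → ∃ g : 𝓕, ι g = E.indicator 1)
    (hdense : Dense {f : 𝓕 | (∃ C, ∀ x, ‖ι f x‖ ≤ C) ∧
      ∃ K : Set X, IsCompact K ∧ ∀ x ∉ K, ι f x = 0})
    (hφ : IsCompInvariant ι φ) (hψ : IsCompInvariant ι ψ)
    (hφψ : Function.LeftInverse φ ψ) (hψφ : Function.LeftInverse ψ φ) (hw : ∀ x, 0 < w x)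
    (hw_bdd : ∃ C, ∀ x, w x ≤ C) (hw_inv_bdd : ∃ C, ∀ x, (w x)⁻¹ ≤ C)
    (hT : ∀ f x, ι (T f) x = (w x : ℂ) * ι f (φ x)) {S : 𝓕 →L[ℂ] 𝓕} (hTS : ∀ f, T (S f) = f)
    (hcond : ∀ K : Set X, IsCompact K → WeightCondition ι w φ ψ K) :
    IsSemiTransitive T := by
  intro O₁ O₂ hO₁ hO₂ hne₁ hne₂
  obtain ⟨f, ⟨⟨Cf, hCf⟩, Kf, hKf, hfK⟩, hfO⟩ := hdense.exists_mem_open hO₁ hne₁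
  obtain ⟨g, ⟨⟨Cg, hCg⟩, Kg, hKg, hgK⟩, hgO⟩ := hdense.exists_mem_open hO₂ hne₂
  obtain ⟨ε₁, hε₁, hball₁⟩ := Metric.isOpen_iff.1 hO₁ f hfO
  obtain ⟨ε₂, hε₂, hball₂⟩ := Metric.isOpen_iff.1 hO₂ g hgO
  have hK := hKf.union hKg
  obtain ⟨m, c, hm, hc, u, hu, hcu⟩ := hF.exists_dist_lt_of_weight_condition hchi hφ hψ hφψ hψφ hw
    hw_bdd hw_inv_bdd hT hTS hK (hcond _ hK) (le_max_right (max Cf Cg) 0)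
    (fun x => (hCf x).trans ((le_max_left _ _).trans (le_max_left _ _)))
    (fun x => (hCg x).trans ((le_max_right _ _).trans (le_max_left _ _)))
    (fun x hx => hfK x fun h => hx (Or.inl h)) (fun x hx => hgK x fun h => hx (Or.inr h))
    (lt_min hε₁ hε₂)
  exact ⟨m, c, hm, hc, u, hball₁ (hu.trans_le (min_le_left _ _)),
    hball₂ (hcu.trans_le (min_le_right _ _))⟩

end IsSolidFunctionSpace

theorem semi_transitive_iff_weight_condition_solid_general
    {X : Type*} [TopologicalSpace X] [MeasurableSpace X]
    {𝓕 : Type*} [NormedAddCommGroup 𝓕] [NormedSpace ℂ 𝓕]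
    (ι : 𝓕 →ₗ[ℂ] (X → ℂ)) (hι_inj : Function.Injective ι)
    (hι_meas : ∀ f : 𝓕, Measurable (ι f))
    (α : X ≃ₜ X)
    (haper : ∀ K : Set X, IsCompact K →
      ∃ N : ℕ, 0 < N ∧ ∀ n ≥ N, ((⇑α)^[n] '' K) ∩ K = ∅)
    -- `𝓕` is solid:
    (hsolid : ∀ (f : 𝓕) (g : X → ℂ), Measurable g →
      (∀ x, ‖g x‖ ≤ ‖ι f x‖) → ∃ g' : 𝓕, ι g' = g ∧ ‖g'‖ ≤ ‖f‖)
    -- `𝓕` is `α`-invariant: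
    (hinv : ∀ f : 𝓕, ∃ f₁ f₂ : 𝓕,
      ι f₁ = (ι f) ∘ ⇑α ∧ ‖f₁‖ = ‖f‖ ∧ ι f₂ = (ι f) ∘ ⇑α.symm ∧ ‖f₂‖ = ‖f‖)
    -- characteristic functions of compact sets belong to `𝓕`:
    (hchi : ∀ E : Set X, IsCompact E → ∃ g : 𝓕, ι g = Set.indicator E 1)
    -- bounded compactly supported elements are dense in `𝓕`:
    (hdense : Dense {f : 𝓕 | (∃ C, ∀ x, ‖ι f x‖ ≤ C) ∧
      ∃ K : Set X, IsCompact K ∧ ∀ x ∉ K, ι f x = 0})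
    (w : X → ℝ) (hw_pos : ∀ x, 0 < w x)
    (hw_bdd : ∃ C, ∀ x, w x ≤ C) (hw_inv_bdd : ∃ C, ∀ x, (w x)⁻¹ ≤ C)
    (T S : 𝓕 →L[ℂ] 𝓕)
    (hT : ∀ (f : 𝓕) (x : X), ι (T f) x = (w x : ℂ) * ι f (α x))
    (hTS : ∀ f, T (S f) = f) :
    IsSemiTransitive T ↔
      ∀ K : Set X, IsCompact K →
        ∃ (E : ℕ → Set X) (n : ℕ → ℕ),
          (∀ k, MeasurableSet (E k)) ∧ (∀ k, E k ⊆ K) ∧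
          StrictMono n ∧ (∀ k, 1 ≤ n k) ∧
          (∃ g : ℕ → 𝓕, (∀ k, ι (g k) = Set.indicator (K \ E k) 1) ∧
            Tendsto (fun k => ‖g k‖) atTop (nhds 0)) ∧
          Tendsto (fun k =>
              sSup ((fun x => ∏ j ∈ range (n k), (w ((⇑α)^[j] x))⁻¹) '' E k) *
              sSup ((fun x => ∏ j ∈ Icc 1 (n k), w ((⇑α.symm)^[j] x)) '' E k))
            atTop (nhds 0) := by
  have hF : IsSolidFunctionSpace ι := ⟨hι_inj, hι_meas, hsolid⟩
  have hα : IsCompInvariant ι α := fun f =>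
    let ⟨f₁, _, h₁, n₁, _⟩ := hinv f
    ⟨f₁, h₁, n₁⟩
  have hαsymm : IsCompInvariant ι α.symm := fun f =>
    let ⟨_, f₂, _, _, h₂, n₂⟩ := hinv f
    ⟨f₂, h₂, n₂⟩
  exact ⟨fun hsemi K hK =>
      hF.weight_condition_of_isSemiTransitive hchi haper hα hαsymm hw_pos hT hsemi hK,
    hF.isSemiTransitive_of_weight_condition hchi hdense hα hαsymm α.apply_symm_apply
      α.symm_apply_apply hw_pos hw_bdd hw_inv_bdd hT hTS⟩

/-- Characterization of topologically semi-transitive weighted composition operators on a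
solid Banach function space `𝓕` (realized, via the injective linear map `ι`, as a space
of Borel measurable functions on `X`) satisfying condition `Ω_α`. -/
theorem semi_transitive_iff_weight_condition_solid
    {X : Type*} [TopologicalSpace X] [MeasurableSpace X] [BorelSpace X]
    {𝓕 : Type*} [NormedAddCommGroup 𝓕] [NormedSpace ℂ 𝓕] [CompleteSpace 𝓕]
    (ι : 𝓕 →ₗ[ℂ] (X → ℂ)) (hι_inj : Function.Injective ι)
    (hι_meas : ∀ f : 𝓕, Measurable (ι f))
    (α : X ≃ₜ X)
    (haper : ∀ K : Set X, IsCompact K →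
      ∃ N : ℕ, 0 < N ∧ ∀ n ≥ N, ((⇑α)^[n] '' K) ∩ K = ∅)
    -- `𝓕` is solid:
    (hsolid : ∀ (f : 𝓕) (g : X → ℂ), Measurable g →
      (∀ x, ‖g x‖ ≤ ‖ι f x‖) → ∃ g' : 𝓕, ι g' = g ∧ ‖g'‖ ≤ ‖f‖)
    -- `𝓕` is `α`-invariant:
    (hinv : ∀ f : 𝓕, ∃ f₁ f₂ : 𝓕,
      ι f₁ = (ι f) ∘ ⇑α ∧ ‖f₁‖ = ‖f‖ ∧ ι f₂ = (ι f) ∘ ⇑α.symm ∧ ‖f₂‖ = ‖f‖)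
    -- characteristic functions of compact sets belong to `𝓕`:
    (hchi : ∀ E : Set X, IsCompact E → ∃ g : 𝓕, ι g = Set.indicator E 1)
    -- bounded compactly supported elements are dense in `𝓕`:
    (hdense : Dense {f : 𝓕 | (∃ C, ∀ x, ‖ι f x‖ ≤ C) ∧
      ∃ K : Set X, IsCompact K ∧ ∀ x ∉ K, ι f x = 0})
    (w : X → ℝ) (hw_meas : Measurable w) (hw_pos : ∀ x, 0 < w x)
    (hw_bdd : ∃ C, ∀ x, w x ≤ C) (hw_inv_bdd : ∃ C, ∀ x, (w x)⁻¹ ≤ C)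
    (T S : 𝓕 →L[ℂ] 𝓕)
    (hT : ∀ (f : 𝓕) (x : X), ι (T f) x = (w x : ℂ) * ι f (α x))
    (hST : ∀ f, S (T f) = f) (hTS : ∀ f, T (S f) = f) :
    IsSemiTransitive T ↔
      ∀ K : Set X, IsCompact K →
        ∃ (E : ℕ → Set X) (n : ℕ → ℕ),
          (∀ k, MeasurableSet (E k)) ∧ (∀ k, E k ⊆ K) ∧
          StrictMono n ∧ (∀ k, 1 ≤ n k) ∧
          (∃ g : ℕ → 𝓕, (∀ k, ι (g k) = Set.indicator (K \ E k) 1) ∧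
            Tendsto (fun k => ‖g k‖) atTop (nhds 0)) ∧
          Tendsto (fun k =>
              sSup ((fun x => ∏ j ∈ range (n k), (w ((⇑α)^[j] x))⁻¹) '' E k) *
              sSup ((fun x => ∏ j ∈ Icc 1 (n k), w ((⇑α.symm)^[j] x)) '' E k))
            atTop (nhds 0) :=
  semi_transitive_iff_weight_condition_solid_general ι hι_inj hι_meas α haper hsolid hinv hchi
    hdense w hw_pos hw_bdd hw_inv_bdd T S hT hTS
end

section
/- Let τ ∈ C_b(ℝ), let A_τ be the Segal algebra corresponding to τ with norm ‖·‖_τ, let w be a continuous positive function on ℝ such that w and w⁻¹ = 1/w are bounded, and let α be an aperiodic homeomorphism of ℝ with τ∘α = τ, so that T̃_{α,w}(f) = w·(f∘α) is an invertible bounded linear operator on A_τ. Then the following are equivalent: (1) T̃_{α,w} is topologically semi-transitive on A_τ; (2) for each ε ∈ (0,1) and every compact subset K of |τ|⁻¹([0,ε]) there exists a strictly increasing sequence (n_k) of natural numbers such that lim_{k→∞} [ ( sup_{t∈K} ∏_{j=0}^{n_k−1} w(α^{j−n_k}(t)) ) · ( sup_{t∈K} ∏_{j=0}^{n_k−1}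 (w(α^j(t)))⁻¹ ) ] = 0. -/
/-!
Write `Wₙ(t) = ∏_{j<n} w(αʲ t)`. Then `T̃ⁿ f = Wₙ · (f ∘ αⁿ)` and
`T̃⁻ⁿ g = (Wₙ ∘ α⁻ⁿ)⁻¹ · (g ∘ α⁻ⁿ)`, and since `τ ∘ α = τ`, composing with `α^{±n}` does not
change the norm of `A_τ`; the two suprema of the weight condition are therefore the bounds of
`T̃ⁿ` and `T̃⁻ⁿ` on functions supported in `K`.

If `T̃` is semi-transitive, let `Φ ∈ A_τ` be `1` on `K` with compact support `L`. Pulling the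
target open set back by `T̃ᴺ` gives `f` and `λ` with `f ≈ Φ` and `λ T̃ⁿ f ≈ Φ` for arbitrarily
large `n`, hence with `αⁿ(L) ∩ L = ∅`. Evaluating at `t ∈ K` bounds `Wₙ(t)⁻¹` by `|λ| δ/(1-δ)`,
evaluating at `α⁻ⁿ t` bounds `Wₙ(α⁻ⁿ t)` by `δ/((1-δ)|λ|)`, and `λ` cancels in the product.

Conversely, elements of `A_τ` with compact support inside `{|τ| < 1}` are dense (cut off where
`|f|` is small, and use dominated convergence for the series of the norm). For such `f, g`,
`‖T̃ⁿ f‖ ‖T̃⁻ⁿ g‖` is at most the weight quantity times `‖f‖ ‖g‖`, and for a suitable `λ > 0` the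
vector `f + λ⁻¹ T̃⁻ⁿ g` is close to `f` while `λ T̃ⁿ` maps it to `λ T̃ⁿ f + g`, close to `g`.
-/

open Filter Finset

open Topology

theorem exists_pos_mul_lt_and_lt_mul {A B c : ℝ} (hA : 0 ≤ A) (hB : 0 ≤ B) (hc : 0 < c)
    (h : A * B < c ^ 2) : ∃ lam : ℝ, 0 < lam ∧ lam * A < c ∧ B < lam * c := by
  rcases hA.eq_or_lt with rfl | hA
  · exact ⟨B / c + 1, by positivity, by simpa using hc, by
      rw [add_mul, div_mul_cancel₀ B hc.ne']; linarith⟩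
  · obtain ⟨lam, h₁, h₂⟩ : ∃ lam, B / c < lam ∧ lam < c / A :=
      exists_between (by rw [div_lt_div_iff₀ hc hA]; nlinarith)
    exact ⟨lam, (div_nonneg hB hc.le).trans_lt h₁, (lt_div_iff₀ hA).1 h₂, (div_lt_iff₀ hc).1 h₁⟩

theorem exists_strictMono_tendsto_zero_of_frequently_le {u : ℕ → ℝ} (hu : ∀ n, 0 ≤ u n)
    (h : ∀ c > 0, ∃ᶠ n in atTop, u n ≤ c) :
    ∃ φ : ℕ → ℕ, StrictMono φ ∧ (∀ k, 1 ≤ φ k) ∧ Tendsto (fun k => u (φ k)) atTop (𝓝 0) := by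
  obtain ⟨φ, hφ, hφu⟩ := extraction_forall_of_frequently fun k =>
    ((h (1 / (k + 1)) (by positivity)).and_eventually (eventually_ge_atTop 1)).mono
      fun n hn => And.comm.1 hn
  exact ⟨φ, hφ, fun k => (hφu k).1, tendsto_of_tendsto_of_tendsto_of_le_of_le tendsto_const_nhds
    tendsto_one_div_add_atTop_nhds_zero_nat (fun k => hu _) fun k => (hφu k).2⟩

theorem IsCompact.exists_lt_forall_le {X : Type*} [TopologicalSpace X] {K : Set X}
    (hK : IsCompact K) {φ : X → ℝ} (hφ : ContinuousOn φ K) {a : ℝ} (h : ∀ x ∈ K, φ x < a) :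
    ∃ b < a, ∀ x ∈ K, φ x ≤ b := by
  rcases K.eq_empty_or_nonempty with rfl | hne
  · exact ⟨a - 1, by linarith, by simp⟩
  · obtain ⟨x, hx, hmax⟩ := hK.exists_isMaxOn hne hφ
    exact ⟨φ x, h x hx, hmax⟩

section SemiTransitive

variable {E : Type*} [NormedAddCommGroup E] [NormedSpace ℂ E] {T : E →L[ℂ] E}

theorem IsSemiTransitive.exists_le_pow (hT : IsSemiTransitive T) (hsurj : Function.Surjective T)
    {O₁ O₂ : Set E} (h₁ : IsOpen O₁) (h₂ : IsOpen O₂) (hne₁ : O₁.Nonempty)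
    (hne₂ : O₂.Nonempty) (N : ℕ) :
    ∃ n, N ≤ n ∧ ∃ lam : ℂ, lam ≠ 0 ∧ ∃ f ∈ O₁, lam • (T ^ n) f ∈ O₂ := by
  obtain ⟨n, lam, -, hlam, f, hf, hmem⟩ := hT O₁ ((T ^ N) ⁻¹' O₂) h₁
    (h₂.preimage (T ^ N).continuous) hne₁
    (hne₂.preimage (by rw [FunLike.coe_pow_eq_iterate]; exact hsurj.iterate N))
  refine ⟨N + n, N.le_add_right n, lam, hlam, f, hf, ?_⟩
  rwa [Set.mem_preimage, map_smul, ← mul_apply_eq_comp, ← pow_add] at hmem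

theorem isSemiTransitive_of_dense {S : E →L[ℂ] E} (hTS : T * S = 1) {D : Set E} (hD : Dense D)
    (h : ∀ f ∈ D, ∀ g ∈ D, ∀ c > 0, ∃ n, 1 ≤ n ∧ ‖(T ^ n) f‖ * ‖(S ^ n) g‖ < c) :
    IsSemiTransitive T := by
  intro O₁ O₂ h₁ h₂ hne₁ hne₂
  obtain ⟨f, hfO, hfD⟩ := hD.inter_open_nonempty O₁ h₁ hne₁
  obtain ⟨g, hgO, hgD⟩ := hD.inter_open_nonempty O₂ h₂ hne₂
  obtain ⟨r₁, hr₁, hball₁⟩ := Metric.isOpen_iff.1 h₁ f hfO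
  obtain ⟨r₂, hr₂, hball₂⟩ := Metric.isOpen_iff.1 h₂ g hgO
  set r := min r₁ r₂
  have hr : 0 < r := lt_min hr₁ hr₂
  obtain ⟨n, hn, hlt⟩ := h f hfD g hgD (r ^ 2) (by positivity)
  obtain ⟨lam, hlam, hlamT, hlamS⟩ :=
    exists_pos_mul_lt_and_lt_mul (norm_nonneg _) (norm_nonneg _) hr hlt
  have hlam' : (lam : ℂ) ≠ 0 := Complex.ofReal_ne_zero.2 hlam.ne'
  have hTSn : (T ^ n) ((S ^ n) g) = g := by
    rw [← mul_apply_eq_comp, pow_mul_pow_eq_one n hTS, one_apply_eq_self]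
  refine ⟨n, lam, hn, hlam', f + (lam : ℂ)⁻¹ • (S ^ n) g, hball₁ ?_, hball₂ ?_⟩
  · rw [Metric.mem_ball, dist_eq_norm, add_sub_cancel_left, norm_smul, norm_inv,
      Complex.norm_of_nonneg hlam.le, inv_mul_lt_iff₀ hlam]
    exact hlamS.trans_le (mul_le_mul_of_nonneg_left (min_le_left _ _) hlam.le)
  · rw [Metric.mem_ball, dist_eq_norm, map_add, map_smul, hTSn, smul_add, smul_smul,
      mul_inv_cancel₀ hlam', one_smul, add_sub_cancel_right, norm_smul,
      Complex.norm_of_nonneg hlam.le]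
    exact hlamT.trans_le (min_le_right _ _)

end SemiTransitive

section OrbitProd

variable {X : Type*}

def orbitProd (w : X → ℝ) (α : X → X) (n : ℕ) (t : X) : ℝ :=
  ∏ j ∈ range n, w (α^[j] t)

theorem orbitProd_pos {w : X → ℝ} (hw : ∀ t, 0 < w t) (α : X → X) (n : ℕ) (t : X) :
    0 < orbitProd w α n t :=
  prod_pos fun _ _ => hw _

theorem continuous_orbitProd [TopologicalSpace X] {w : X → ℝ} (hw : Continuous w) {α : X → X}
    (hα : Continuous α) (n : ℕ) : Continuous (orbitProd w α n) :=
  continuous_finsetProd _ fun j _ => hw.comp (hα.iterate j)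

theorem prod_range_iterate_sub_eq_orbitProd {w : X → ℝ} {α β : X → X}
    (h : Function.LeftInverse α β) (n : ℕ) (t : X) :
    ∏ j ∈ range n, w (β^[n - j] t) = orbitProd w α n (β^[n] t) := by
  refine prod_congr rfl fun j hj => ?_
  obtain ⟨k, rfl⟩ := Nat.exists_eq_add_of_le (mem_range.1 hj).le
  rw [Nat.add_sub_cancel_left, Function.iterate_add_apply, h.iterate j]

theorem apply_pow_eq_orbitProd {E : Type*} [NormedAddCommGroup E] [NormedSpace ℂ E]
    {ι : E → X → ℂ} {T : E →L[ℂ] E} {w : X → ℝ} {α : X → X}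
    (hT : ∀ f t, ι (T f) t = w t * ι f (α t)) (n : ℕ) (f : E) (t : X) :
    ι ((T ^ n) f) t = orbitProd w α n t * ι f (α^[n] t) := by
  induction n generalizing f with
  | zero => simp [orbitProd]
  | succ n ih =>
    rw [pow_succ, mul_apply_eq_comp, ih, hT, orbitProd, orbitProd, prod_range_succ,
      Function.iterate_succ_apply']
    push_cast
    ring

variable [TopologicalSpace X]

noncomputable def supWeightProd (w : X → ℝ) (α : X ≃ₜ X) (K : Set X) (n : ℕ) : ℝ :=
  sSup ((fun t => ∏ j ∈ range n, w ((⇑α.symm)^[n - j] t)) '' K) *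
    sSup ((fun t => ∏ j ∈ range n, (w ((⇑α)^[j] t))⁻¹) '' K)

theorem supWeightProd_eq (w : X → ℝ) (α : X ≃ₜ X) (K : Set X) (n : ℕ) :
    supWeightProd w α K n = sSup ((fun t => orbitProd w α n ((⇑α.symm)^[n] t)) '' K) *
      sSup ((fun t => (orbitProd w α n t)⁻¹) '' K) := by
  simp only [supWeightProd, prod_range_iterate_sub_eq_orbitProd α.apply_symm_apply, orbitProd,
    prod_inv_distrib]

theorem supWeightProd_nonneg {w : X → ℝ} (hw : ∀ t, 0 < w t) (α : X ≃ₜ X) (K : Set X) (n : ℕ) :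
    0 ≤ supWeightProd w α K n := by
  rw [supWeightProd_eq]
  exact mul_nonneg (Real.sSup_nonneg <| by rintro _ ⟨t, -, rfl⟩; exact (orbitProd_pos hw ..).le)
    (Real.sSup_nonneg <| by rintro _ ⟨t, -, rfl⟩; exact (inv_pos.2 (orbitProd_pos hw ..)).le)

end OrbitProd

section Segal

theorem norm_mul_pow_le_of_le {R : Type*} [NormedDivisionRing R] {x y : R} {M C : ℝ}
    (hx : ‖x‖ ≤ M) (hy : ‖y‖ ≤ C) (k : ℕ) : ‖x * y ^ k‖ ≤ M * C ^ k := by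
  rw [norm_mul, norm_pow]
  exact mul_le_mul hx (pow_le_pow_left₀ (norm_nonneg _) hy k) (by positivity)
    ((norm_nonneg _).trans hx)

noncomputable def segalTerm (τ g : ℝ → ℂ) (k : ℕ) : ℝ :=
  ⨆ t, ‖g t * τ t ^ k‖

theorem segalTerm_nonneg (τ g : ℝ → ℂ) (k : ℕ) : 0 ≤ segalTerm τ g k :=
  Real.iSup_nonneg fun _ => norm_nonneg _

theorem segalTerm_le_of_le_comp {τ g h : ℝ → ℂ} {k : ℕ}
    (hg : BddAbove (Set.range fun t => ‖g t * τ t ^ k‖)) {c : ℝ} (hc : 0 ≤ c) {σ : ℝ → ℝ}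
    (hσ : ∀ t, τ (σ t) = τ t) (hle : ∀ t, ‖h t‖ ≤ c * ‖g (σ t)‖) :
    segalTerm τ h k ≤ c * segalTerm τ g k := by
  refine Real.iSup_le (fun t => ?_) (mul_nonneg hc (segalTerm_nonneg τ g k))
  calc ‖h t * τ t ^ k‖ = ‖h t‖ * ‖τ (σ t)‖ ^ k := by rw [norm_mul, norm_pow, hσ]
    _ ≤ c * ‖g (σ t)‖ * ‖τ (σ t)‖ ^ k := by gcongr; exact hle t
    _ = c * ‖g (σ t) * τ (σ t) ^ k‖ := by rw [norm_mul, norm_pow, mul_assoc]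
    _ ≤ c * segalTerm τ g k := by gcongr; exact le_ciSup hg (σ t)

/-- `ι` identifies the normed space `𝓐` isometrically with the Segal algebra `A_τ` of a
bounded continuous `τ`. -/
structure IsSegalRealization (τ : ℝ → ℂ) {𝓐 : Type*} [NormedAddCommGroup 𝓐] [NormedSpace ℂ 𝓐]
    (ι : 𝓐 →ₗ[ℂ] ℝ → ℂ) : Prop where
  continuous_tau : Continuous τ
  bounded_tau : ∃ C, ∀ t, ‖τ t‖ ≤ C
  exists_eq_iff : ∀ g : ℝ → ℂ, (∃ f, ι f = g) ↔
    Continuous g ∧ Tendsto g (cocompact ℝ) (𝓝 0) ∧ Summable (segalTerm τ g)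
  norm_eq : ∀ f, ‖f‖ = ∑' k, segalTerm τ (ι f) k

namespace IsSegalRealization

variable {τ : ℝ → ℂ} {𝓐 : Type*} [NormedAddCommGroup 𝓐] [NormedSpace ℂ 𝓐]
  {ι : 𝓐 →ₗ[ℂ] ℝ → ℂ}

theorem summable (hA : IsSegalRealization τ ι) (f : 𝓐) : Summable (segalTerm τ (ι f)) :=
  ((hA.exists_eq_iff _).1 ⟨f, rfl⟩).2.2

theorem bddAbove_range_norm_mul_pow (hA : IsSegalRealization τ ι) (f : 𝓐) (k : ℕ) :
    BddAbove (Set.range fun t => ‖ι f t * τ t ^ k‖) := by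
  obtain ⟨hc, h0, -⟩ := (hA.exists_eq_iff _).1 ⟨f, rfl⟩
  obtain ⟨M, hM⟩ := (ZeroAtInftyContinuousMap.isBounded_range ⟨⟨ι f, hc⟩, h0⟩).exists_norm_le
  obtain ⟨C, hC⟩ := hA.bounded_tau
  exact ⟨M * C ^ k, by rintro _ ⟨t, rfl⟩; exact norm_mul_pow_le_of_le (hM _ ⟨t, rfl⟩) (hC t) k⟩

theorem norm_apply_le (hA : IsSegalRealization τ ι) (f : 𝓐) (t : ℝ) : ‖ι f t‖ ≤ ‖f‖ := by
  rw [hA.norm_eq]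
  calc ‖ι f t‖ = ‖ι f t * τ t ^ 0‖ := by simp
    _ ≤ segalTerm τ (ι f) 0 := le_ciSup (hA.bddAbove_range_norm_mul_pow f 0) t
    _ ≤ ∑' k, segalTerm τ (ι f) k :=
      (hA.summable f).le_tsum 0 fun k _ => segalTerm_nonneg τ _ k

theorem norm_le_of_le_comp (hA : IsSegalRealization τ ι) {f g : 𝓐} {c : ℝ} (hc : 0 ≤ c)
    {σ : ℝ → ℝ} (hσ : ∀ t, τ (σ t) = τ t) (hle : ∀ t, ‖ι f t‖ ≤ c * ‖ι g (σ t)‖) :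
    ‖f‖ ≤ c * ‖g‖ := by
  rw [hA.norm_eq, hA.norm_eq, ← tsum_mul_left]
  exact (hA.summable f).tsum_le_tsum
    (fun k => segalTerm_le_of_le_comp (hA.bddAbove_range_norm_mul_pow g k) hc hσ hle)
    ((hA.summable g).mul_left c)

theorem apply_eq_zero_of_one_le_norm (hA : IsSegalRealization τ ι) (f : 𝓐) {t : ℝ}
    (ht : 1 ≤ ‖τ t‖) : ι f t = 0 := by
  refine norm_le_zero_iff.1 (ge_of_tendsto (hA.summable f).tendsto_atTop_zero
    (Eventually.of_forall fun k => ?_))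
  calc ‖ι f t‖ ≤ ‖ι f t‖ * ‖τ t‖ ^ k := le_mul_of_one_le_right (norm_nonneg _) (one_le_pow₀ ht)
    _ = ‖ι f t * τ t ^ k‖ := by rw [norm_mul, norm_pow]
    _ ≤ segalTerm τ (ι f) k := le_ciSup (hA.bddAbove_range_norm_mul_pow f k) t

theorem exists_eq_of_tsupport_subset (hA : IsSegalRealization τ ι) {g : ℝ → ℂ}
    (hg : Continuous g) (hcs : HasCompactSupport g) (hτ : ∀ t ∈ tsupport g, ‖τ t‖ < 1) :
    ∃ f, ι f = g := by
  obtain ⟨ε, hε, hgε⟩ := hcs.isCompact.exists_lt_forall_le hA.continuous_tau.norm.continuousOn hτ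
  obtain ⟨M, hM⟩ := hg.bounded_above_of_compact_support hcs
  have hM0 : 0 ≤ M := (norm_nonneg _).trans (hM 0)
  refine (hA.exists_eq_iff g).2 ⟨hg, hcs.is_zero_at_infty, Summable.of_nonneg_of_le
    (segalTerm_nonneg τ g) (fun k => Real.iSup_le (fun t => ?_) (by positivity))
    ((summable_geometric_of_lt_one (le_max_right ε 0) (max_lt hε one_pos)).mul_left M)⟩
  by_cases ht : t ∈ tsupport g
  · exact norm_mul_pow_le_of_le (hM t) ((hgε t ht).trans (le_max_left ε 0)) k
  · rw [image_eq_zero_of_notMem_tsupport ht, zero_mul, norm_zero]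
    positivity

theorem tendsto_norm_zero_of_dominated {β : Type*} {l : Filter β} (hA : IsSegalRealization τ ι)
    {F : β → 𝓐} {g : 𝓐} {η : β → ℝ} (hdom : ∀ j t, ‖ι (F j) t‖ ≤ ‖ι g t‖)
    (hsmall : ∀ j t, ‖ι (F j) t‖ ≤ η j) (hη : Tendsto η l (𝓝 0)) :
    Tendsto (fun j => ‖F j‖) l (𝓝 0) := by
  obtain ⟨C, hC⟩ := hA.bounded_tau
  have hC0 : 0 ≤ C := (norm_nonneg _).trans (hC 0)
  have hterm (k : ℕ) : Tendsto (fun j => segalTerm τ (ι (F j)) k) l (𝓝 0) := by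
    refine tendsto_of_tendsto_of_tendsto_of_le_of_le tendsto_const_nhds
      (by simpa using hη.mul_const (C ^ k)) (fun j => segalTerm_nonneg τ _ k) fun j => ?_
    exact Real.iSup_le (fun t => norm_mul_pow_le_of_le (hsmall j t) (hC t) k)
      (mul_nonneg ((norm_nonneg _).trans (hsmall j 0)) (by positivity))
  simp_rw [hA.norm_eq]
  simpa using tendsto_tsum_of_dominated_convergence (hA.summable g) hterm
    (Eventually.of_forall fun j k => by
      rw [Real.norm_of_nonneg (segalTerm_nonneg τ _ k), ← one_mul (segalTerm τ (ι g) k)]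
      exact segalTerm_le_of_le_comp (hA.bddAbove_range_norm_mul_pow g k) zero_le_one (fun t => rfl)
        fun t => by rw [one_mul]; exact hdom j t)

/-- The cut-off lies in `A_τ` because `ι f` vanishes where `|τ| ≥ 1`, so that `{|ι f| ≥ η}` is a
compact subset of `{|τ| < 1}`. -/
theorem exists_cutoff (hA : IsSegalRealization τ ι) (f : 𝓐) {η : ℝ} (hη : 0 < η) :
    ∃ f₁ : 𝓐, (HasCompactSupport (ι f₁) ∧ ∀ t ∈ tsupport (ι f₁), ‖τ t‖ < 1) ∧
      ∀ t, ‖ι (f - f₁) t‖ ≤ ‖ι f t‖ ∧ ‖ι (f - f₁) t‖ ≤ η := by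
  obtain ⟨hc, h0, -⟩ := (hA.exists_eq_iff _).1 ⟨f, rfl⟩
  set C := {t | η ≤ ‖ι f t‖}
  have hC : IsCompact C := by
    obtain ⟨K, hK, hCK⟩ := mem_cocompact'.1 ((tendsto_norm_zero.comp h0).eventually_lt_const hη)
    exact hK.of_isClosed_subset (isClosed_le continuous_const hc.norm)
      fun t (ht : η ≤ ‖ι f t‖) => hCK fun (h : ‖ι f t‖ < η) => (not_le.2 h) ht
  have hCτ : C ⊆ {t | ‖τ t‖ < 1} := fun t (ht : η ≤ ‖ι f t‖) => not_le.1 fun h1 => by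
    rw [hA.apply_eq_zero_of_one_le_norm f h1, norm_zero] at ht
    linarith
  obtain ⟨ρ, hρ1, hρcs, hρτ, hρ01⟩ := exists_continuousMap_one_of_isCompact_subset_isOpen hC
    (isOpen_lt hA.continuous_tau.norm continuous_const) hCτ
  set g : ℝ → ℂ := fun t => ι f t * (ρ t : ℂ)
  have hgc : HasCompactSupport g :=
    (HasCompactSupport.comp_left (f := ρ) hρcs Complex.ofReal_zero).mul_left
  have hgτ : ∀ t ∈ tsupport g, ‖τ t‖ < 1 := fun t ht =>
    hρτ (tsupport_comp_subset Complex.ofReal_zero ρ (tsupport_mul_subset_right ht))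
  obtain ⟨f₁, hf₁⟩ := hA.exists_eq_of_tsupport_subset (by fun_prop) hgc hgτ
  refine ⟨f₁, hf₁ ▸ ⟨hgc, hgτ⟩, fun t => ?_⟩
  have hdiff : ‖ι (f - f₁) t‖ = ‖ι f t‖ * (1 - ρ t) := by
    rw [map_sub, Pi.sub_apply, hf₁, ← mul_one_sub, norm_mul, ← Complex.ofReal_one,
      ← Complex.ofReal_sub, Complex.norm_of_nonneg (sub_nonneg.2 (hρ01 t).2)]
  rw [hdiff]
  refine ⟨mul_le_of_le_one_right (norm_nonneg _) (by linarith [(hρ01 t).1]), ?_⟩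
  by_cases ht : t ∈ C
  · rw [hρ1 ht, Pi.one_apply, sub_self, mul_zero]
    exact hη.le
  · exact (mul_le_of_le_one_right (norm_nonneg _) (by linarith [(hρ01 t).1])).trans
      (not_le.1 ht).le

theorem dense_compactSupport (hA : IsSegalRealization τ ι) :
    Dense {f : 𝓐 | HasCompactSupport (ι f) ∧ ∀ t ∈ tsupport (ι f), ‖τ t‖ < 1} := by
  refine Metric.dense_iff.2 fun f δ hδ => ?_
  choose F hF hFf using fun j : ℕ => hA.exists_cutoff f (η := 1 / (j + 1)) (by positivity)
  obtain ⟨j, hj⟩ := ((hA.tendsto_norm_zero_of_dominated (fun j t => (hFf j t).1)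
    (fun j t => (hFf j t).2) tendsto_one_div_add_atTop_nhds_zero_nat).eventually_lt_const hδ).exists
  exact ⟨F j, by rwa [Metric.mem_ball, dist_eq_norm'], hF j⟩

theorem exists_eq_one_on (hA : IsSegalRealization τ ι) {K : Set ℝ} (hK : IsCompact K)
    (hKτ : ∀ t ∈ K, ‖τ t‖ < 1) : ∃ Φ : 𝓐, HasCompactSupport (ι Φ) ∧ ∀ t ∈ K, ι Φ t = 1 := by
  obtain ⟨ρ, hρ1, hρcs, hρτ, -⟩ := exists_continuousMap_one_of_isCompact_subset_isOpen hK
    (isOpen_lt hA.continuous_tau.norm continuous_const) hKτ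
  have hgc : HasCompactSupport fun t => (ρ t : ℂ) :=
    HasCompactSupport.comp_left (f := ρ) hρcs Complex.ofReal_zero
  obtain ⟨Φ, hΦ⟩ := hA.exists_eq_of_tsupport_subset (by fun_prop) hgc
    fun t ht => hρτ (tsupport_comp_subset Complex.ofReal_zero ρ ht)
  exact ⟨Φ, hΦ ▸ hgc, fun t ht => by simp [hΦ, hρ1 ht]⟩

variable {T : 𝓐 →L[ℂ] 𝓐} {w : ℝ → ℝ} {α : ℝ ≃ₜ ℝ}

theorem inv_orbitProd_le_of_near (hA : IsSegalRealization τ ι)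
    (hT : ∀ f t, ι (T f) t = w t * ι f (α t)) (hw : ∀ t, 0 < w t) {Φ f : 𝓐} {lam : ℂ} {n : ℕ}
    {δ : ℝ} (hδ : δ < 1) (hf : ‖f - Φ‖ < δ) (hTf : ‖lam • (T ^ n) f - Φ‖ < δ) {t : ℝ}
    (h1 : ι Φ t = 1) (h0 : ι Φ ((⇑α)^[n] t) = 0) :
    (orbitProd w α n t)⁻¹ ≤ ‖lam‖ * (δ / (1 - δ)) := by
  have hP := orbitProd_pos hw α n t
  have hx := (hA.norm_apply_le _ ((⇑α)^[n] t)).trans_lt hf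
  have hy := (hA.norm_apply_le _ t).trans_lt hTf
  rw [map_sub, Pi.sub_apply, h0, sub_zero] at hx
  rw [map_sub, map_smul, Pi.sub_apply, Pi.smul_apply, apply_pow_eq_orbitProd hT, h1,
    smul_eq_mul] at hy
  have : 1 - δ ≤ ‖lam‖ * orbitProd w α n t * δ := by
    have := norm_sub_norm_le (1 : ℂ) (lam * (orbitProd w α n t * ι f ((⇑α)^[n] t)))
    rw [norm_sub_rev, norm_one, norm_mul, norm_mul, Complex.norm_of_nonneg hP.le,
      ← mul_assoc] at this
    linarith [mul_le_mul_of_nonneg_left hx.le (by positivity : 0 ≤ ‖lam‖ * orbitProd w α n t)]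
  rw [inv_le_iff_one_le_mul₀ hP, mul_div_assoc', div_mul_eq_mul_div, le_div_iff₀ (by linarith)]
  linarith

theorem orbitProd_le_of_near (hA : IsSegalRealization τ ι)
    (hT : ∀ f t, ι (T f) t = w t * ι f (α t)) (hw : ∀ t, 0 < w t) {Φ f : 𝓐} {lam : ℂ} {n : ℕ}
    {δ : ℝ} (hδ : δ < 1) (hf : ‖f - Φ‖ < δ) (hTf : ‖lam • (T ^ n) f - Φ‖ < δ) {t : ℝ}
    (h0 : ι Φ t = 0) (h1 : ι Φ ((⇑α)^[n] t) = 1) :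
    ‖lam‖ * orbitProd w α n t ≤ δ / (1 - δ) := by
  have hP := orbitProd_pos hw α n t
  have hx := (hA.norm_apply_le _ ((⇑α)^[n] t)).trans_lt hf
  have hy := (hA.norm_apply_le _ t).trans_lt hTf
  rw [map_sub, Pi.sub_apply, h1] at hx
  rw [map_sub, map_smul, Pi.sub_apply, Pi.smul_apply, apply_pow_eq_orbitProd hT, h0,
    smul_eq_mul, sub_zero, norm_mul, norm_mul, Complex.norm_of_nonneg hP.le] at hy
  have := norm_sub_norm_le (1 : ℂ) (ι f ((⇑α)^[n] t))
  rw [norm_sub_rev, norm_one] at this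
  rw [le_div_iff₀ (by linarith), ← mul_assoc] at *
  linarith [mul_le_mul_of_nonneg_left (by linarith : 1 - δ ≤ ‖ι f ((⇑α)^[n] t)‖)
    (by positivity : 0 ≤ ‖lam‖ * orbitProd w α n t)]

theorem supWeightProd_le_of_near (hA : IsSegalRealization τ ι)
    (hT : ∀ f t, ι (T f) t = w t * ι f (α t)) (hw : ∀ t, 0 < w t) {Φ f : 𝓐} {lam : ℂ}
    (hlam : lam ≠ 0) {n : ℕ} {δ : ℝ} (hδ : δ < 1) (hf : ‖f - Φ‖ < δ)
    (hTf : ‖lam • (T ^ n) f - Φ‖ < δ) {K : Set ℝ} (hK : ∀ t ∈ K, ι Φ t = 1)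
    (hfwd : ∀ t ∈ K, ι Φ ((⇑α)^[n] t) = 0) (hbwd : ∀ t, (⇑α)^[n] t ∈ K → ι Φ t = 0) :
    supWeightProd w α K n ≤ (δ / (1 - δ)) ^ 2 := by
  have hlam' : 0 < ‖lam‖ := norm_pos_iff.2 hlam
  have hδ0 : 0 ≤ δ := (norm_nonneg _).trans hf.le
  have hback : ∀ s, (⇑α)^[n] ((⇑α.symm)^[n] s) = s :=
    Function.LeftInverse.iterate α.apply_symm_apply n
  have hq : 0 ≤ δ / (1 - δ) := div_nonneg hδ0 (by linarith)
  rw [supWeightProd_eq]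
  calc _ ≤ δ / (1 - δ) / ‖lam‖ * (‖lam‖ * (δ / (1 - δ))) := by
        refine mul_le_mul (Real.sSup_le ?_ (div_nonneg hq hlam'.le))
          (Real.sSup_le ?_ (mul_nonneg hlam'.le hq)) (Real.sSup_nonneg ?_) (div_nonneg hq hlam'.le)
        · rintro _ ⟨s, hs, rfl⟩
          rw [le_div_iff₀ hlam', mul_comm]
          exact hA.orbitProd_le_of_near hT hw hδ hf hTf (hbwd _ ((hback s).symm ▸ hs))
            ((hback s).symm ▸ hK s hs)
        · rintro _ ⟨t, ht, rfl⟩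
          exact hA.inv_orbitProd_le_of_near hT hw hδ hf hTf (hK t ht) (hfwd t ht)
        · rintro _ ⟨t, -, rfl⟩
          exact (inv_pos.2 (orbitProd_pos hw ..)).le
    _ = (δ / (1 - δ)) ^ 2 := by field_simp

theorem frequently_supWeightProd_le (hA : IsSegalRealization τ ι)
    (haper : ∀ K : Set ℝ, IsCompact K → ∃ N : ℕ, 0 < N ∧ ∀ n ≥ N, ((⇑α)^[n] '' K) ∩ K = ∅)
    (hT : ∀ f t, ι (T f) t = w t * ι f (α t)) (hw : ∀ t, 0 < w t)
    (hsurj : Function.Surjective T) (hsemi : IsSemiTransitive T) {K : Set ℝ} (hK : IsCompact K)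
    (hKτ : ∀ t ∈ K, ‖τ t‖ < 1) {c : ℝ} (hc : 0 < c) :
    ∃ᶠ n in atTop, supWeightProd w α K n ≤ c := by
  obtain ⟨Φ, hΦc, hΦK⟩ := hA.exists_eq_one_on hK hKτ
  have hKL : K ⊆ tsupport (ι Φ) := fun t ht => subset_tsupport _ (by simp [hΦK t ht])
  obtain ⟨N, -, hN⟩ := haper _ hΦc.isCompact
  obtain ⟨δ, hδ, hδ1, hδc⟩ : ∃ δ : ℝ, 0 < δ ∧ δ < 1 ∧ δ / (1 - δ) = √c :=
    ⟨√c / (1 + √c), by positivity, (div_lt_one (by positivity)).2 (lt_one_add _),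
      by field_simp; ring⟩
  refine frequently_atTop.2 fun m => ?_
  obtain ⟨n, hn, lam, hlam, f, hf, hTf⟩ := hsemi.exists_le_pow hsurj Metric.isOpen_ball
    Metric.isOpen_ball ⟨Φ, Metric.mem_ball_self hδ⟩ ⟨Φ, Metric.mem_ball_self hδ⟩ (max m N)
  rw [Metric.mem_ball, dist_eq_norm] at hf hTf
  have hL := (hN n (le_of_max_le_right hn)).subset
  refine ⟨n, le_of_max_le_left hn, ?_⟩
  calc supWeightProd w α K n ≤ (δ / (1 - δ)) ^ 2 := hA.supWeightProd_le_of_near hT hw hlam hδ1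
        hf hTf hΦK
        (fun t ht => image_eq_zero_of_notMem_tsupport fun h => hL ⟨⟨t, hKL ht, rfl⟩, h⟩)
        (fun u hu => image_eq_zero_of_notMem_tsupport fun h => hL ⟨⟨u, h, rfl⟩, hKL hu⟩)
    _ = c := by rw [hδc, Real.sq_sqrt hc.le]

theorem norm_pow_apply_le (hA : IsSegalRealization τ ι) (hτα : ∀ t, τ (α t) = τ t)
    (hT : ∀ f t, ι (T f) t = w t * ι f (α t)) (hw : ∀ t, 0 < w t) {K : Set ℝ} {f : 𝓐}
    (hf : Function.support (ι f) ⊆ K) {n : ℕ} {a : ℝ} (ha0 : 0 ≤ a)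
    (ha : ∀ s ∈ K, orbitProd w α n ((⇑α.symm)^[n] s) ≤ a) : ‖(T ^ n) f‖ ≤ a * ‖f‖ := by
  refine hA.norm_le_of_le_comp ha0 (σ := (⇑α)^[n])
    (congrFun (Function.iterate_invariant (funext hτα) n)) fun t => ?_
  rw [apply_pow_eq_orbitProd hT, norm_mul, Complex.norm_of_nonneg (orbitProd_pos hw α n t).le]
  by_cases h : ι f ((⇑α)^[n] t) = 0
  · simp [h]
  · gcongr
    simpa only [Function.LeftInverse.iterate α.symm_apply_apply n t] using ha _ (hf h)

theorem norm_pow_apply_le_of_mul_eq_one (hA : IsSegalRealization τ ι)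
    (hτα : ∀ t, τ (α t) = τ t) (hT : ∀ f t, ι (T f) t = w t * ι f (α t)) (hw : ∀ t, 0 < w t)
    {S : 𝓐 →L[ℂ] 𝓐} (hTS : T * S = 1) {K : Set ℝ} {g : 𝓐} (hg : Function.support (ι g) ⊆ K)
    {n : ℕ} {b : ℝ} (hb0 : 0 ≤ b) (hb : ∀ s ∈ K, (orbitProd w α n s)⁻¹ ≤ b) :
    ‖(S ^ n) g‖ ≤ b * ‖g‖ := by
  have hτα' (t : ℝ) : τ (α.symm t) = τ t := by rw [← hτα, α.apply_symm_apply]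
  refine hA.norm_le_of_le_comp hb0 (σ := (⇑α.symm)^[n])
    (congrFun (Function.iterate_invariant (funext hτα') n)) fun t => ?_
  set s := (⇑α.symm)^[n] t
  have hP := orbitProd_pos hw α n s
  have key : ‖ι g s‖ = orbitProd w α n s * ‖ι ((S ^ n) g) t‖ := by
    conv_lhs => rw [← one_apply_eq_self (F := 𝓐 →L[ℂ] 𝓐) g, ← pow_mul_pow_eq_one n hTS,
      mul_apply_eq_comp, apply_pow_eq_orbitProd hT,
      Function.LeftInverse.iterate α.apply_symm_apply n t]
    rw [norm_mul, Complex.norm_of_nonneg hP.le]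
  by_cases h : ι g s = 0
  · rw [h, norm_zero, eq_comm, mul_eq_zero] at key
    rw [h, norm_zero, mul_zero, key.resolve_left hP.ne']
  · rw [key, ← mul_assoc]
    exact le_mul_of_one_le_left (norm_nonneg _) ((inv_le_iff_one_le_mul₀ hP).1 (hb s (hg h)))

theorem norm_pow_mul_norm_pow_le (hA : IsSegalRealization τ ι) (hτα : ∀ t, τ (α t) = τ t)
    (hT : ∀ f t, ι (T f) t = w t * ι f (α t)) (hwc : Continuous w) (hw : ∀ t, 0 < w t)
    {S : 𝓐 →L[ℂ] 𝓐} (hTS : T * S = 1) {K : Set ℝ} (hK : IsCompact K) {f g : 𝓐}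
    (hf : Function.support (ι f) ⊆ K) (hg : Function.support (ι g) ⊆ K) (n : ℕ) :
    ‖(T ^ n) f‖ * ‖(S ^ n) g‖ ≤ supWeightProd w α K n * (‖f‖ * ‖g‖) := by
  have hcont := continuous_orbitProd hwc α.continuous n
  set a := sSup ((fun t => orbitProd w α n ((⇑α.symm)^[n] t)) '' K)
  set b := sSup ((fun t => (orbitProd w α n t)⁻¹) '' K)
  have ha0 : 0 ≤ a := Real.sSup_nonneg <| by
    rintro _ ⟨t, -, rfl⟩; exact (orbitProd_pos hw ..).le
  have hb0 : 0 ≤ b := Real.sSup_nonneg <| by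
    rintro _ ⟨t, -, rfl⟩; exact (inv_pos.2 (orbitProd_pos hw ..)).le
  have hTf : ‖(T ^ n) f‖ ≤ a * ‖f‖ := hA.norm_pow_apply_le hτα hT hw hf ha0 fun s hs =>
    le_csSup ((hK.image (hcont.comp (α.symm.continuous.iterate n))).bddAbove) ⟨s, hs, rfl⟩
  have hSg : ‖(S ^ n) g‖ ≤ b * ‖g‖ := hA.norm_pow_apply_le_of_mul_eq_one hτα hT hw hTS hg hb0
    fun s hs => le_csSup ((hK.image (hcont.inv₀ fun t => (orbitProd_pos hw ..).ne')).bddAbove)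
      ⟨s, hs, rfl⟩
  calc ‖(T ^ n) f‖ * ‖(S ^ n) g‖ ≤ a * ‖f‖ * (b * ‖g‖) :=
        mul_le_mul hTf hSg (norm_nonneg _) (by positivity)
    _ = supWeightProd w α K n * (‖f‖ * ‖g‖) := by rw [supWeightProd_eq]; ring

theorem isSemiTransitive_of_weight_condition (hA : IsSegalRealization τ ι)
    (hτα : ∀ t, τ (α t) = τ t) (hT : ∀ f t, ι (T f) t = w t * ι f (α t)) (hwc : Continuous w)
    (hw : ∀ t, 0 < w t) {S : 𝓐 →L[ℂ] 𝓐} (hTS : T * S = 1)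
    (hcond : ∀ ε : ℝ, 0 < ε → ε < 1 → ∀ K : Set ℝ, IsCompact K → (∀ t ∈ K, ‖τ t‖ ≤ ε) →
      ∃ n : ℕ → ℕ, StrictMono n ∧ (∀ k, 1 ≤ n k) ∧
        Tendsto (fun k => supWeightProd w α K (n k)) atTop (𝓝 0)) :
    IsSemiTransitive T := by
  refine isSemiTransitive_of_dense hTS hA.dense_compactSupport ?_
  rintro f ⟨hfc, hfτ⟩ g ⟨hgc, hgτ⟩ c hc
  have hK : IsCompact (tsupport (ι f) ∪ tsupport (ι g)) := hfc.isCompact.union hgc.isCompact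
  obtain ⟨ε, hε, hKε⟩ := hK.exists_lt_forall_le hA.continuous_tau.norm.continuousOn
    fun t ht => ht.elim (hfτ t) (hgτ t)
  obtain ⟨n, -, hn, hlim⟩ := hcond (max ε (1 / 2)) (by positivity) (max_lt hε (by norm_num)) _ hK
    fun t ht => (hKε t ht).trans (le_max_left _ _)
  obtain ⟨k, hk⟩ := ((zero_mul (‖f‖ * ‖g‖) ▸ hlim.mul_const (‖f‖ * ‖g‖)).eventually_lt_const
    hc).exists
  exact ⟨n k, hn k, (hA.norm_pow_mul_norm_pow_le hτα hT hwc hw hTS hK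
    ((subset_tsupport _).trans Set.subset_union_left)
    ((subset_tsupport _).trans Set.subset_union_right) (n k)).trans_lt hk⟩

end IsSegalRealization

end Segal

theorem semi_transitive_iff_weight_condition_segal_general
    (τ : ℝ → ℂ) (hτ_cont : Continuous τ) (hτ_bdd : ∃ C, ∀ t, ‖τ t‖ ≤ C)
    {𝓐 : Type*} [NormedAddCommGroup 𝓐] [NormedSpace ℂ 𝓐]
    (ι : 𝓐 →ₗ[ℂ] (ℝ → ℂ))
    (hrange : ∀ g : ℝ → ℂ, (∃ f : 𝓐, ι f = g) ↔
      (Continuous g ∧ Tendsto g (cocompact ℝ) (nhds 0) ∧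
        Summable (fun k : ℕ => ⨆ t : ℝ, ‖g t * (τ t) ^ k‖)))
    (hnorm : ∀ f : 𝓐, ‖f‖ = ∑' k : ℕ, ⨆ t : ℝ, ‖ι f t * (τ t) ^ k‖)
    (α : ℝ ≃ₜ ℝ)
    (haper : ∀ K : Set ℝ, IsCompact K →
      ∃ N : ℕ, 0 < N ∧ ∀ n ≥ N, ((⇑α)^[n] '' K) ∩ K = ∅)
    (hτα : ∀ t, τ (α t) = τ t)
    (w : ℝ → ℝ) (hw_cont : Continuous w) (hw_pos : ∀ t, 0 < w t)
    (T S : 𝓐 →L[ℂ] 𝓐)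
    (hT : ∀ (f : 𝓐) (t : ℝ), ι (T f) t = (w t : ℂ) * ι f (α t))
    (hTS : ∀ f, T (S f) = f) :
    IsSemiTransitive T ↔
      ∀ ε : ℝ, 0 < ε → ε < 1 → ∀ K : Set ℝ, IsCompact K →
        (∀ t ∈ K, ‖τ t‖ ≤ ε) →
        ∃ n : ℕ → ℕ, StrictMono n ∧ (∀ k, 1 ≤ n k) ∧
          Tendsto (fun k =>
              sSup ((fun t => ∏ j ∈ range (n k), w ((⇑α.symm)^[n k - j] t)) '' K) *
              sSup ((fun t => ∏ j ∈ range (n k), (w ((⇑α)^[j] t))⁻¹) '' K))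
            atTop (nhds 0) := by
  have hA : IsSegalRealization τ ι := ⟨hτ_cont, hτ_bdd, hrange, hnorm⟩
  refine ⟨fun hsemi ε _ hε K hK hKτ => ?_,
    hA.isSemiTransitive_of_weight_condition hτα hT hw_cont hw_pos (ContinuousLinearMap.ext hTS)⟩
  exact exists_strictMono_tendsto_zero_of_frequently_le (supWeightProd_nonneg hw_pos α K)
    fun c hc => hA.frequently_supWeightProd_le haper hT hw_pos (fun f => ⟨S f, hTS f⟩) hsemi hK
      (fun t ht => (hKτ t ht).trans_lt hε) hc

/-- Characterization of topologically semi-transitive weighted composition operators on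
the Segal algebra `A_τ = { f ∈ C₀(ℝ) : Σ_k ‖f·τ^k‖_∞ < ∞ }` with the norm
`‖f‖_τ = Σ_k ‖f·τ^k‖_∞`.  The Banach space `𝓐` together with the injective linear map
`ι` realizes `A_τ` as a space of functions on `ℝ`. -/
theorem semi_transitive_iff_weight_condition_segal
    (τ : ℝ → ℂ) (hτ_cont : Continuous τ) (hτ_bdd : ∃ C, ∀ t, ‖τ t‖ ≤ C)
    {𝓐 : Type*} [NormedAddCommGroup 𝓐] [NormedSpace ℂ 𝓐] [CompleteSpace 𝓐]
    (ι : 𝓐 →ₗ[ℂ] (ℝ → ℂ)) (hι_inj : Function.Injective ι)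
    (hrange : ∀ g : ℝ → ℂ, (∃ f : 𝓐, ι f = g) ↔
      (Continuous g ∧ Tendsto g (cocompact ℝ) (nhds 0) ∧
        Summable (fun k : ℕ => ⨆ t : ℝ, ‖g t * (τ t) ^ k‖)))
    (hnorm : ∀ f : 𝓐, ‖f‖ = ∑' k : ℕ, ⨆ t : ℝ, ‖ι f t * (τ t) ^ k‖)
    (α : ℝ ≃ₜ ℝ)
    (haper : ∀ K : Set ℝ, IsCompact K →
      ∃ N : ℕ, 0 < N ∧ ∀ n ≥ N, ((⇑α)^[n] '' K) ∩ K = ∅)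
    (hτα : ∀ t, τ (α t) = τ t)
    (w : ℝ → ℝ) (hw_cont : Continuous w) (hw_pos : ∀ t, 0 < w t)
    (hw_bdd : ∃ C, ∀ t, w t ≤ C) (hw_inv_bdd : ∃ C, ∀ t, (w t)⁻¹ ≤ C)
    (T S : 𝓐 →L[ℂ] 𝓐)
    (hT : ∀ (f : 𝓐) (t : ℝ), ι (T f) t = (w t : ℂ) * ι f (α t))
    (hST : ∀ f, S (T f) = f) (hTS : ∀ f, T (S f) = f) :
    IsSemiTransitive T ↔
      ∀ ε : ℝ, 0 < ε → ε < 1 → ∀ K : Set ℝ, IsCompact K →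
        (∀ t ∈ K, ‖τ t‖ ≤ ε) →
        ∃ n : ℕ → ℕ, StrictMono n ∧ (∀ k, 1 ≤ n k) ∧
          Tendsto (fun k =>
              sSup ((fun t => ∏ j ∈ range (n k), w ((⇑α.symm)^[n k - j] t)) '' K) *
              sSup ((fun t => ∏ j ∈ range (n k), (w ((⇑α)^[j] t))⁻¹) '' K))
            atTop (nhds 0) :=
  semi_transitive_iff_weight_condition_segal_general τ hτ_cont hτ_bdd ι hrange hnorm α haper hτα w
    hw_cont hw_pos T S hT hTS
end
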